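/- arXiv:1611.03434 — 12 statements merged into one kernel-verified Lean document; each statement's English description precedes it below -/
import Mathlib

section
/- For every integer k ≥ 1, ∂(x^k) = −q⁻² [k]_{q⁴} x^{k−1} w². -/
/-- The q-integer `[n]_s = 1 + s + ⋯ + s^(n-1)`. -/
noncomputable def qint (s : ℂ) (n : ℕ) : ℂ := ∑ i ∈ Finset.range n, s ^ i

theorem partial_x_pow
    (q : ℝ) (hq0 : 0 < q) (hq1 : q < 1)
    {A : Type*} [Ring A] [Algebra ℂ A]
    (z w : A)
    (hzw : w * z - ((q : ℂ) ^ 2) • (z * w) = ((1 : ℂ) - (q : ℂ) ^ 2) • (1 : A))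
    (x : A) (hx : x = 1 - z * w)
    (σ : A ≃ₐ[ℂ] A) (hσz : σ z = ((q : ℂ) ^ 2) • z)
    (hσw : σ w = (((q : ℂ) ^ 2)⁻¹) • w)
    (D : A →ₗ[ℂ] A)
    (hD : ∀ a b : A, D (a * b) = D a * σ b + a * D b)
    (hDz : D z = w) (hDw : D w = 0)
    (k : ℕ) (hk : 1 ≤ k)
    :
    D (x ^ k) = (-(((q : ℂ) ^ 2)⁻¹ * qint ((q : ℂ) ^ 4) k)) • (x ^ (k - 1) * w ^ 2) := by
  have hqc : ((q : ℂ)) ≠ 0 := by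
    exact_mod_cast ne_of_gt hq0
  have hc : ((q : ℂ) ^ 2) ≠ 0 := pow_ne_zero _ hqc
  have hcc : ((q : ℂ) ^ 2)⁻¹ * ((q : ℂ) ^ 2) = 1 := inv_mul_cancel₀ hc
  -- σ fixes x
  have hσx : σ x = x := by
    rw [hx, map_sub, map_one, map_mul, hσz, hσw, smul_mul_smul_comm,
      mul_inv_cancel₀ hc, one_smul]
  -- D 1 = 0
  have hD1 : D (1 : A) = 0 := by
    have h := hD 1 1
    rw [mul_one, show σ (1 : A) = 1 from map_one σ, mul_one, one_mul] at h
    exact (left_eq_add.mp h)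
  -- D x = -q⁻² • w²
  have hDx : D x = (-(((q : ℂ) ^ 2)⁻¹)) • (w ^ 2) := by
    rw [hx, map_sub, hD1, hD z w, hDz, hDw, hσw, mul_zero, add_zero, mul_smul_comm,
      zero_sub, ← neg_smul, ← sq]
  -- w * z expressed
  have hwz : w * z = ((q : ℂ) ^ 2) • (z * w) + ((1 : ℂ) - (q : ℂ) ^ 2) • (1 : A) := by
    linear_combination (norm := module) hzw
  -- w * x = q² • (x * w)
  have hwx : w * x = ((q : ℂ) ^ 2) • (x * w) := by
    rw [hx, mul_sub, mul_one, sub_mul, one_mul, ← mul_assoc, hwz]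
    rw [add_mul, smul_mul_assoc, smul_mul_assoc, one_mul, mul_assoc]
    module
  -- w² * x = q⁴ • (x * w²)
  have hw2x : w ^ 2 * x = ((q : ℂ) ^ 4) • (x * w ^ 2) := by
    have h : w ^ 2 * x = w * (w * x) := by rw [sq, mul_assoc]
    rw [h, hwx, mul_smul_comm, ← mul_assoc, hwx, smul_mul_assoc, smul_smul,
      mul_assoc]
    congr 1
    · ring
    · rw [sq]
  induction k with
  | zero => omega
  | succ n ih =>
    rcases Nat.eq_or_lt_of_le hk with h1 | h1
    · -- n + 1 = 1, i.e. n = 0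
      have hn : n = 0 := by omega
      subst hn
      simp only [Nat.zero_add, pow_one, Nat.add_sub_cancel, pow_zero, one_mul]
      rw [hDx]
      simp [qint]
    · have hn : 1 ≤ n := by omega
      have ihn := ih hn
      have hxp : x ^ (n + 1) = x ^ n * x := pow_succ x n
      have hsub : n - 1 + 1 = n := by omega
      rw [hxp, hD, hσx, ihn, hDx, smul_mul_assoc, mul_assoc, hw2x, mul_smul_comm,
        smul_smul, ← mul_assoc, ← pow_succ, hsub, mul_smul_comm, Nat.add_sub_cancel,
        ← add_smul]
      congr 1
      have hgs : qint ((q : ℂ) ^ 4) (n + 1) = (q : ℂ) ^ 4 * qint ((q : ℂ) ^ 4) n + 1 := by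
        simpa [qint] using geom_sum_succ (x := (q : ℂ) ^ 4) (n := n)
      rw [hgs]
      ring
end

section
/- For every integer n ≥ 1, ∂(xⁿ z²) = −q² [n]_{q⁴} x^{n−1} + (q² + 1) [n+1]_{q⁴} xⁿ − [n+2]_{q⁴} x^{n+1}. -/
/-!
Write `Q = q²`. The disc relation makes `x = 1 - z w` a `Q`-normal element: `x z = Q z x`, `w x = Q x w`,
and `σ` fixes `x`. Hence `∂x = -Q⁻¹ w²` satisfies `∂x · x = Q² x · ∂x`, and the twisted Leibniz rule
gives `∂(xⁿ) = -Q⁻¹ [n]_{Q²} x^{n-1} w²`. Combining this with `∂(z²) = (Q + 1) - (Q² + 1) x` and the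
normal form `w² z² = 1 - (Q + Q²) x + Q³ x²` yields the formula after collecting powers of `x`.
-/

open Finset

section TwistedLeibniz

variable {R A : Type*} [CommSemiring R] [Ring A] [Algebra R A]
  {σ : A ≃ₐ[R] A} {D : A →ₗ[R] A}

theorem map_one_eq_zero_of_twisted_leibniz (hD : ∀ a b : A, D (a * b) = D a * σ b + a * D b) :
    D 1 = 0 := by
  simpa using hD 1 1

theorem map_pow_succ_of_twisted_leibniz (hD : ∀ a b : A, D (a * b) = D a * σ b + a * D b)
    {x : A} {s : R} (hσx : σ x = x) (hDx : D x * x = s • (x * D x)) (k : ℕ) :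
    D (x ^ (k + 1)) = (∑ i ∈ range (k + 1), s ^ i) • (x ^ k * D x) := by
  induction k with
  | zero => simp
  | succ k ih =>
    rw [pow_succ x (k + 1), hD, hσx, ih, smul_mul_assoc, mul_assoc, hDx, mul_smul_comm, smul_smul,
      ← mul_assoc, ← pow_succ, geom_sum_succ (n := k + 1), add_smul, one_smul, mul_comm s]

end TwistedLeibniz

namespace QuantumDisc

section Relations

variable {K A : Type*} [CommRing K] [Ring A] [Algebra K A] {Q : K} {z w x : A}
  (hzw : w * z - Q • (z * w) = (1 - Q) • (1 : A)) (hx : x = 1 - z * w)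
include hzw hx

theorem w_mul_z : w * z = 1 - Q • x := by
  rw [sub_eq_iff_eq_add.mp hzw, hx]
  module

theorem x_mul_z : x * z = Q • (z * x) := by
  have : x * z = z - z * (w * z) := by rw [hx]; noncomm_ring
  rw [this, w_mul_z hzw hx, mul_sub, mul_one, mul_smul_comm]
  module

theorem w_mul_x : w * x = Q • (x * w) := by
  have : w * x = w - w * z * w := by rw [hx]; noncomm_ring
  rw [this, w_mul_z hzw hx, sub_mul, one_mul, smul_mul_assoc]
  module

theorem w_sq_mul_x : w ^ 2 * x = Q ^ 2 • (x * w ^ 2) := by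
  rw [sq, mul_assoc, w_mul_x hzw hx, mul_smul_comm, ← mul_assoc, w_mul_x hzw hx, smul_mul_assoc,
    smul_smul, mul_assoc, ← sq, ← sq]

theorem w_sq_mul_z_sq : w ^ 2 * z ^ 2 = 1 - (Q + Q ^ 2) • x + Q ^ 3 • x ^ 2 := by
  have hwzz : w * z * z = z - Q ^ 2 • (z * x) := by
    rw [w_mul_z hzw hx, sub_mul, one_mul, smul_mul_assoc, x_mul_z hzw hx, smul_smul, sq]
  have hwzx : w * (z * x) = x - Q • x ^ 2 := by
    rw [← mul_assoc, w_mul_z hzw hx, sub_mul, one_mul, smul_mul_assoc, sq]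
  calc w ^ 2 * z ^ 2 = w * (w * z * z) := by noncomm_ring
    _ = 1 - (Q + Q ^ 2) • x + Q ^ 3 • x ^ 2 := by
      rw [hwzz, mul_sub, mul_smul_comm, hwzx, w_mul_z hzw hx]
      module

end Relations

section Derivation

variable {K A : Type*} [Field K] [Ring A] [Algebra K A] {Q : K} {z w x : A}
  (hzw : w * z - Q • (z * w) = (1 - Q) • (1 : A)) (hx : x = 1 - z * w)
  {σ : A ≃ₐ[K] A} {D : A →ₗ[K] A}
  (hD : ∀ a b : A, D (a * b) = D a * σ b + a * D b) (hDz : D z = w) (hDw : D w = 0)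

include hx in
theorem algEquiv_apply_x (hQ : Q ≠ 0) (hσz : σ z = Q • z) (hσw : σ w = Q⁻¹ • w) : σ x = x := by
  rw [hx, map_sub, map_one, map_mul, hσz, hσw, smul_mul_smul_comm, mul_inv_cancel₀ hQ, one_smul]

include hx hD hDz hDw in
theorem map_x (hσw : σ w = Q⁻¹ • w) : D x = -(Q⁻¹ • w ^ 2) := by
  rw [hx, map_sub, map_one_eq_zero_of_twisted_leibniz hD, hD, hDz, hDw, hσw, mul_zero, add_zero,
    mul_smul_comm, ← sq, zero_sub]

include hzw hx hD hDz in
theorem map_z_sq (hσz : σ z = Q • z) : D (z ^ 2) = (Q + 1) • (1 : A) - (Q ^ 2 + 1) • x := by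
  have hzw' : z * w = 1 - x := by rw [hx, sub_sub_cancel]
  rw [sq, hD, hDz, hσz, mul_smul_comm, w_mul_z hzw hx, hzw']
  module

include hzw hx hD hDz hDw in
theorem map_x_pow_succ (hQ : Q ≠ 0) (hσz : σ z = Q • z) (hσw : σ w = Q⁻¹ • w) (k : ℕ) :
    D (x ^ (k + 1)) = (-Q⁻¹ * ∑ i ∈ range (k + 1), (Q ^ 2) ^ i) • (x ^ k * w ^ 2) := by
  have hσx := algEquiv_apply_x hx hQ hσz hσw
  have hDx := map_x hx hD hDz hDw hσw
  have hDx_comm : D x * x = Q ^ 2 • (x * D x) := by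
    rw [hDx, neg_mul, smul_mul_assoc, w_sq_mul_x hzw hx, mul_neg, mul_smul_comm, smul_comm, smul_neg]
  rw [map_pow_succ_of_twisted_leibniz hD hσx hDx_comm, hDx, mul_neg, mul_smul_comm, smul_neg,
    smul_smul, neg_mul, neg_smul, mul_comm]

end Derivation

end QuantumDisc

open QuantumDisc

theorem partial_xn_z_sq_general
    (q : ℝ) (hq0 : 0 < q)
    {A : Type*} [Ring A] [Algebra ℂ A]
    (z w : A)
    (hzw : w * z - ((q : ℂ) ^ 2) • (z * w) = ((1 : ℂ) - (q : ℂ) ^ 2) • (1 : A))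
    (x : A) (hx : x = 1 - z * w)
    (σ : A ≃ₐ[ℂ] A) (hσz : σ z = ((q : ℂ) ^ 2) • z)
    (hσw : σ w = (((q : ℂ) ^ 2)⁻¹) • w)
    (D : A →ₗ[ℂ] A)
    (hD : ∀ a b : A, D (a * b) = D a * σ b + a * D b)
    (hDz : D z = w) (hDw : D w = 0)
    (n : ℕ) (hn : 1 ≤ n)
    :
    D (x ^ n * z ^ 2) =
      (-((q : ℂ) ^ 2 * qint ((q : ℂ) ^ 4) n)) • x ^ (n - 1) +
        (((q : ℂ) ^ 2 + 1) * qint ((q : ℂ) ^ 4) (n + 1)) • x ^ n -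
        (qint ((q : ℂ) ^ 4) (n + 2)) • x ^ (n + 1) := by
  obtain ⟨m, rfl⟩ : ∃ m, n = m + 1 := ⟨n - 1, (Nat.succ_pred_eq_of_pos hn).symm⟩
  set Q : ℂ := (q : ℂ) ^ 2
  have hQ : Q ≠ 0 := pow_ne_zero _ (by exact_mod_cast hq0.ne')
  have hQ4 : (q : ℂ) ^ 4 = Q ^ 2 := by ring
  have hσz2 : σ (z ^ 2) = Q ^ 2 • z ^ 2 := by rw [map_pow, hσz, smul_pow]
  rw [hD, hσz2, map_x_pow_succ hzw hx hD hDz hDw hQ hσz hσw, map_z_sq hzw hx hD hDz hσz,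
    mul_smul_comm, smul_mul_assoc, smul_smul, mul_assoc, w_sq_mul_z_sq hzw hx, hQ4]
  simp only [qint, geom_sum_succ, mul_sub, mul_add, mul_one, mul_smul_comm, ← pow_succ,
    ← pow_add, Nat.add_sub_cancel]
  match_scalars <;> field_simp <;> ring

theorem partial_xn_z_sq
    (q : ℝ) (hq0 : 0 < q) (hq1 : q < 1)
    {A : Type*} [Ring A] [Algebra ℂ A]
    (z w : A)
    (hzw : w * z - ((q : ℂ) ^ 2) • (z * w) = ((1 : ℂ) - (q : ℂ) ^ 2) • (1 : A))
    (x : A) (hx : x = 1 - z * w)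
    (σ : A ≃ₐ[ℂ] A) (hσz : σ z = ((q : ℂ) ^ 2) • z)
    (hσw : σ w = (((q : ℂ) ^ 2)⁻¹) • w)
    (D : A →ₗ[ℂ] A)
    (hD : ∀ a b : A, D (a * b) = D a * σ b + a * D b)
    (hDz : D z = w) (hDw : D w = 0)
    (n : ℕ) (hn : 1 ≤ n)
    :
    D (x ^ n * z ^ 2) =
      (-((q : ℂ) ^ 2 * qint ((q : ℂ) ^ 4) n)) • x ^ (n - 1) +
        (((q : ℂ) ^ 2 + 1) * qint ((q : ℂ) ^ 4) (n + 1)) • x ^ n -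
        (qint ((q : ℂ) ^ 4) (n + 2)) • x ^ (n + 1) :=
  partial_xn_z_sq_general q hq0 z w hzw x hx σ hσz hσw D hD hDz hDw n hn
end

section
/- If A is generated as a ℂ-algebra by z and w, then ∂ ∘ σ = q⁴ (σ ∘ ∂) and ∂̄ ∘ σ = q⁻⁴ (σ ∘ ∂̄); equivalently, σ⁻¹ ∘ ∂ ∘ σ = q⁴ ∂ (∂ is a q⁴-derivation) and σ⁻¹ ∘ ∂̄ ∘ σ = q⁻⁴ ∂̄ (∂̄ is a q⁻⁴-derivation). -/
theorem skew_derivation_twisting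
    (q : ℝ) (hq0 : 0 < q) (hq1 : q < 1)
    {A : Type*} [Ring A] [Algebra ℂ A]
    (z w : A)
    (hzw : w * z - ((q : ℂ) ^ 2) • (z * w) = ((1 : ℂ) - (q : ℂ) ^ 2) • (1 : A))
    (x : A) (hx : x = 1 - z * w)
    (σ : A ≃ₐ[ℂ] A) (hσz : σ z = ((q : ℂ) ^ 2) • z)
    (hσw : σ w = (((q : ℂ) ^ 2)⁻¹) • w)
    (D : A →ₗ[ℂ] A)
    (hD : ∀ a b : A, D (a * b) = D a * σ b + a * D b)
    (hDz : D z = w) (hDw : D w = 0)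
    (Db : A →ₗ[ℂ] A)
    (hDb : ∀ a b : A, Db (a * b) = Db a * σ b + a * Db b)
    (hDbz : Db z = 0) (hDbw : Db w = ((q : ℂ) ^ 2) • z)
    (hgen : Algebra.adjoin ℂ ({z, w} : Set A) = ⊤)
    :
    (∀ a : A, D (σ a) = ((q : ℂ) ^ 4) • σ (D a)) ∧
    (∀ a : A, Db (σ a) = (((q : ℂ) ^ 4)⁻¹) • σ (Db a)) := by
  have hq : (q : ℂ) ≠ 0 := by exact_mod_cast (ne_of_gt hq0)
  have hD1 : D 1 = 0 := by
    have h := hD 1 1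
    simp only [one_mul, mul_one, map_one] at h
    have h2 : D 1 + 0 = D 1 + D 1 := by rw [add_zero]; exact h
    exact (add_left_cancel h2).symm
  have hDb1 : Db 1 = 0 := by
    have h := hDb 1 1
    simp only [one_mul, mul_one, map_one] at h
    have h2 : Db 1 + 0 = Db 1 + Db 1 := by rw [add_zero]; exact h
    exact (add_left_cancel h2).symm
  have key : ∀ a : A, D (σ a) = ((q : ℂ) ^ 4) • σ (D a) ∧
      Db (σ a) = (((q : ℂ) ^ 4)⁻¹) • σ (Db a) := by
    intro a
    have ha : a ∈ Algebra.adjoin ℂ ({z, w} : Set A) := by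
      rw [hgen]; trivial
    induction ha using Algebra.adjoin_induction with
    | mem u hu =>
      rcases hu with rfl | rfl
      · constructor
        · rw [hσz, map_smul, hDz, hσw, smul_smul]
          congr 1
          field_simp
        · simp [hσz, hDbz]
      · constructor
        · simp [hσw, hDw]
        · rw [hσw, map_smul, hDbw, map_smul, hσz, smul_smul, smul_smul, smul_smul]
          congr 1
          field_simp
    | algebraMap r =>
      have h1 : σ (algebraMap ℂ A r) = algebraMap ℂ A r := by
        simp [AlgEquiv.commutes]
      have h2 : D (algebraMap ℂ A r) = 0 := by
        have : algebraMap ℂ A r = r • (1 : A) := Algebra.algebraMap_eq_smul_one r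
        rw [this, map_smul, hD1, smul_zero]
      have h3 : Db (algebraMap ℂ A r) = 0 := by
        have : algebraMap ℂ A r = r • (1 : A) := Algebra.algebraMap_eq_smul_one r
        rw [this, map_smul, hDb1, smul_zero]
      rw [h1, h2, h3]
      simp
    | add u v hu hv ihu ihv =>
      obtain ⟨ihu1, ihu2⟩ := ihu
      obtain ⟨ihv1, ihv2⟩ := ihv
      constructor <;> simp [map_add, ihu1, ihv1, ihu2, ihv2, smul_add]
    | mul u v hu hv ihu ihv =>
      obtain ⟨ihu1, ihu2⟩ := ihu
      obtain ⟨ihv1, ihv2⟩ := ihv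
      constructor
      · rw [map_mul σ, hD (σ u) (σ v), ihu1, ihv1, hD u v, map_add σ, map_mul σ, map_mul σ,
          smul_add, smul_mul_assoc, mul_smul_comm]
      · rw [map_mul σ, hDb (σ u) (σ v), ihu2, ihv2, hDb u v, map_add σ, map_mul σ, map_mul σ,
          smul_add, smul_mul_assoc, mul_smul_comm]
  exact ⟨fun a => (key a).1, fun a => (key a).2⟩
end

section
/- The following identities hold in Ω¹: d(z)·z − q⁴ z·d(z) = q²(1 − q²) ω and w·d(w) − q⁴ d(w)·w = q²(1 − q²) ω̄. In particular the one-forms ω and ω̄ lie in the sub-bimodule generated by the image of d, so the first-order calculus is generated by d. -/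
theorem one_forms_from_d
    (q : ℝ) (hq0 : 0 < q) (hq1 : q < 1)
    {A : Type*} [Ring A] [Algebra ℂ A]
    (z w : A)
    (hzw : w * z - ((q : ℂ) ^ 2) • (z * w) = ((1 : ℂ) - (q : ℂ) ^ 2) • (1 : A))
    (x : A) (hx : x = 1 - z * w)
    (σ : A ≃ₐ[ℂ] A) (hσz : σ z = ((q : ℂ) ^ 2) • z)
    (hσw : σ w = (((q : ℂ) ^ 2)⁻¹) • w)
    (D : A →ₗ[ℂ] A)
    (hD : ∀ a b : A, D (a * b) = D a * σ b + a * D b)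
    (hDz : D z = w) (hDw : D w = 0)
    (Db : A →ₗ[ℂ] A)
    (hDb : ∀ a b : A, Db (a * b) = Db a * σ b + a * Db b)
    (hDbz : Db z = 0) (hDbw : Db w = ((q : ℂ) ^ 2) • z)
    {Ω : Type*} [Ring Ω] [Algebra ℂ Ω]
    (𝒜 : ℕ → Submodule ℂ Ω)
    (hmul : ∀ {m n : ℕ} {ξ η : Ω}, ξ ∈ 𝒜 m → η ∈ 𝒜 n → ξ * η ∈ 𝒜 (m + n))
    (ι : A →ₐ[ℂ] Ω) (hι : Function.Injective ι)
    (hι0 : ∀ a : A, ι a ∈ 𝒜 0) (hι0' : ∀ u ∈ 𝒜 0, ∃ a : A, ι a = u)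
    (d : Ω →ₗ[ℂ] Ω)
    (hdeg : ∀ {n : ℕ} {ξ : Ω}, ξ ∈ 𝒜 n → d ξ ∈ 𝒜 (n + 1))
    (hdd : ∀ ξ : Ω, d (d ξ) = 0)
    (hLeib : ∀ {n : ℕ} {ξ : Ω}, ξ ∈ 𝒜 n → ∀ η : Ω,
      d (ξ * η) = d ξ * η + ((-1 : ℂ) ^ n) • (ξ * d η))
    (ω ωb : Ω) (hω : ω ∈ 𝒜 1) (hωb : ωb ∈ 𝒜 1)
    (hωcomm : ∀ a : A, ω * ι a = ι (σ a) * ω)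
    (hωbcomm : ∀ a : A, ωb * ι a = ι (σ a) * ωb)
    (hda : ∀ a : A, d (ι a) = ι (D a) * ω + ι (Db a) * ωb)
    :
    d (ι z) * ι z - ((q : ℂ) ^ 4) • (ι z * d (ι z)) = ((q : ℂ) ^ 2 * (1 - (q : ℂ) ^ 2)) • ω ∧
    ι w * d (ι w) - ((q : ℂ) ^ 4) • (d (ι w) * ι w) = ((q : ℂ) ^ 2 * (1 - (q : ℂ) ^ 2)) • ωb ∧
    ω ∈ Submodule.span ℂ {ξ : Ω | ∃ a b c : A, ξ = ι a * d (ι b) * ι c} ∧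
    ωb ∈ Submodule.span ℂ {ξ : Ω | ∃ a b c : A, ξ = ι a * d (ι b) * ι c} := by

  have hq2 : ((q : ℂ) ^ 2) ≠ 0 :=
    pow_ne_zero _ (by exact_mod_cast hq0.ne')
  have h1 : d (ι z) = ι w * ω := by
    rw [hda, hDz, hDbz, map_zero, zero_mul, add_zero]
  have h2 : d (ι w) = ((q : ℂ) ^ 2) • (ι z * ωb) := by
    rw [hda, hDw, hDbw, map_zero, zero_mul, zero_add, map_smul, smul_mul_assoc]
  have hA : ι (w * z) = ((q : ℂ) ^ 2) • ι (z * w) + ((1 : ℂ) - (q : ℂ) ^ 2) • 1 := by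
    have := congrArg ι hzw
    rw [map_sub, map_smul, map_smul, map_one] at this
    rw [sub_eq_iff_eq_add] at this
    exact this.trans (add_comm _ _)
  have key1 : d (ι z) * ι z - ((q : ℂ) ^ 4) • (ι z * d (ι z))
      = ((q : ℂ) ^ 2 * (1 - (q : ℂ) ^ 2)) • ω := by
    rw [h1, mul_assoc, hωcomm, hσz, map_smul, smul_mul_assoc, mul_smul_comm,
      ← mul_assoc, ← mul_assoc, ← map_mul, ← map_mul, hA, add_mul, smul_mul_assoc,
      smul_mul_assoc, one_mul, smul_add, smul_smul, smul_smul]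
    module
  have key2 : ι w * d (ι w) - ((q : ℂ) ^ 4) • (d (ι w) * ι w)
      = ((q : ℂ) ^ 2 * (1 - (q : ℂ) ^ 2)) • ωb := by
    rw [h2, mul_smul_comm, smul_mul_assoc, mul_assoc, hωbcomm, hσw, map_smul,
      smul_mul_assoc, mul_smul_comm, ← mul_assoc, ← mul_assoc, ← map_mul, ← map_mul,
      hA, add_mul, smul_mul_assoc, smul_mul_assoc, one_mul, smul_add, smul_smul,
      smul_smul, smul_smul, smul_smul]
    have hc : (q : ℂ) ^ 4 * (q : ℂ) ^ 2 * ((q : ℂ) ^ 2)⁻¹ = (q : ℂ) ^ 2 * (q : ℂ) ^ 2 := by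
      field_simp
    rw [hc]
    module
  have hc0 : ((q : ℂ) ^ 2 * (1 - (q : ℂ) ^ 2)) ≠ 0 := by
    apply mul_ne_zero hq2
    intro h
    have : (q : ℂ) ^ 2 = 1 := by linear_combination -h
    rw [← Complex.ofReal_pow, ← Complex.ofReal_one, Complex.ofReal_inj] at this
    nlinarith
  set S := {ξ : Ω | ∃ a b c : A, ξ = ι a * d (ι b) * ι c} with hS
  have t1 : d (ι z) * ι z ∈ S := ⟨1, z, z, by rw [map_one, one_mul]⟩
  have t2 : ι z * d (ι z) ∈ S := ⟨z, z, 1, by rw [map_one, mul_one]⟩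
  have t3 : ι w * d (ι w) ∈ S := ⟨w, w, 1, by rw [map_one, mul_one]⟩
  have t4 : d (ι w) * ι w ∈ S := ⟨1, w, w, by rw [map_one, one_mul]⟩
  have hωspan : ω ∈ Submodule.span ℂ S := by
    have : ω = ((q : ℂ) ^ 2 * (1 - (q : ℂ) ^ 2))⁻¹ •
        (d (ι z) * ι z - ((q : ℂ) ^ 4) • (ι z * d (ι z))) := by
      rw [key1, smul_smul, inv_mul_cancel₀ hc0, one_smul]
    rw [this]
    exact Submodule.smul_mem _ _ (sub_mem (Submodule.subset_span t1)
      (Submodule.smul_mem _ _ (Submodule.subset_span t2)))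
  have hωbspan : ωb ∈ Submodule.span ℂ S := by
    have : ωb = ((q : ℂ) ^ 2 * (1 - (q : ℂ) ^ 2))⁻¹ •
        (ι w * d (ι w) - ((q : ℂ) ^ 4) • (d (ι w) * ι w)) := by
      rw [key2, smul_smul, inv_mul_cancel₀ hc0, one_smul]
    rw [this]
    exact Submodule.smul_mem _ _ (sub_mem (Submodule.subset_span t3)
      (Submodule.smul_mem _ _ (Submodule.subset_span t4)))
  exact ⟨key1, key2, hωspan, hωbspan⟩
end

section
/- The following identities hold in Ω²: ω ω̄ = (1 − x) v and ω̄ ω = q⁶ (q² x − 1) v; in particular both ω ω̄ and ω̄ ω lie in the A-module generated by v. -/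
theorem omega_products_in_v_module
    (q : ℝ) (hq0 : 0 < q) (hq1 : q < 1)
    {A : Type*} [Ring A] [Algebra ℂ A]
    (z w : A)
    (hzw : w * z - ((q : ℂ) ^ 2) • (z * w) = ((1 : ℂ) - (q : ℂ) ^ 2) • (1 : A))
    (x : A) (hx : x = 1 - z * w)
    (σ : A ≃ₐ[ℂ] A) (hσz : σ z = ((q : ℂ) ^ 2) • z)
    (hσw : σ w = (((q : ℂ) ^ 2)⁻¹) • w)
    (D : A →ₗ[ℂ] A)
    (hD : ∀ a b : A, D (a * b) = D a * σ b + a * D b)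
    (hDz : D z = w) (hDw : D w = 0)
    (Db : A →ₗ[ℂ] A)
    (hDb : ∀ a b : A, Db (a * b) = Db a * σ b + a * Db b)
    (hDbz : Db z = 0) (hDbw : Db w = ((q : ℂ) ^ 2) • z)
    {Ω : Type*} [Ring Ω] [Algebra ℂ Ω]
    (𝒜 : ℕ → Submodule ℂ Ω)
    (hmul : ∀ {m n : ℕ} {ξ η : Ω}, ξ ∈ 𝒜 m → η ∈ 𝒜 n → ξ * η ∈ 𝒜 (m + n))
    (ι : A →ₐ[ℂ] Ω) (hι : Function.Injective ι)
    (hι0 : ∀ a : A, ι a ∈ 𝒜 0) (hι0' : ∀ u ∈ 𝒜 0, ∃ a : A, ι a = u)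
    (d : Ω →ₗ[ℂ] Ω)
    (hdeg : ∀ {n : ℕ} {ξ : Ω}, ξ ∈ 𝒜 n → d ξ ∈ 𝒜 (n + 1))
    (hdd : ∀ ξ : Ω, d (d ξ) = 0)
    (hLeib : ∀ {n : ℕ} {ξ : Ω}, ξ ∈ 𝒜 n → ∀ η : Ω,
      d (ξ * η) = d ξ * η + ((-1 : ℂ) ^ n) • (ξ * d η))
    (ω ωb : Ω) (hω : ω ∈ 𝒜 1) (hωb : ωb ∈ 𝒜 1)
    (hωcomm : ∀ a : A, ω * ι a = ι (σ a) * ω)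
    (hωbcomm : ∀ a : A, ωb * ι a = ι (σ a) * ωb)
    (hda : ∀ a : A, d (ι a) = ι (D a) * ω + ι (Db a) * ωb)
    (v : Ω)
    (hv : v = ((((q : ℂ) ^ 6)⁻¹) / ((q : ℂ) ^ 2 - 1)) • (ωb * ω + ((q : ℂ) ^ 8) • (ω * ωb)))
    :
    ω * ωb = ι (1 - x) * v ∧
    ωb * ω = ((q : ℂ) ^ 6) • (ι (((q : ℂ) ^ 2) • x - 1) * v) ∧
    (∃ a : A, ω * ωb = ι a * v) ∧ (∃ a : A, ωb * ω = ι a * v) := by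
  -- scalar facts
  have hkne : ((q:ℂ)) ≠ 0 := by
    simpa using Complex.ofReal_ne_zero.mpr hq0.ne'
  have hk2ne : ((q:ℂ)^2) ≠ 0 := pow_ne_zero 2 hkne
  have hk21 : ((q:ℂ)^2 - 1) ≠ 0 := by
    intro h
    have h2 : ((q:ℂ)^2) = 1 := by linear_combination h
    have : ((q^2 : ℝ) : ℂ) = ((1:ℝ) : ℂ) := by push_cast; simpa using h2
    have hq2 : (q:ℝ)^2 = 1 := Complex.ofReal_inj.mp this
    nlinarith
  -- basic d computations
  have h1 : d (ι z) = ι w * ω := by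
    rw [hda, hDz, hDbz, map_zero, zero_mul, add_zero]
  have h2 : d (ι w) = ((q:ℂ)^2) • (ι z * ωb) := by
    rw [hda, hDw, hDbw, map_zero, zero_mul, zero_add, map_smul, smul_mul_assoc]
  -- commutation
  have hωz : ω * ι z = ((q:ℂ)^2) • (ι z * ω) := by
    rw [hωcomm, hσz, map_smul, smul_mul_assoc]
  have hωw : ω * ι w = (((q:ℂ)^2)⁻¹) • (ι w * ω) := by
    rw [hωcomm, hσw, map_smul, smul_mul_assoc]
  have hωbz : ωb * ι z = ((q:ℂ)^2) • (ι z * ωb) := by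
    rw [hωbcomm, hσz, map_smul, smul_mul_assoc]
  have hωbw : ωb * ι w = (((q:ℂ)^2)⁻¹) • (ι w * ωb) := by
    rw [hωbcomm, hσw, map_smul, smul_mul_assoc]
  -- from d² (ι z) = 0
  have hdω : ι w * d ω = -(((q:ℂ)^2) • (ι z * (ωb * ω))) := by
    have h0 := hdd (ι z)
    rw [h1, hLeib (hι0 w) ω, h2, pow_zero, one_smul] at h0
    rw [smul_mul_assoc, mul_assoc] at h0
    linear_combination (norm := module) h0
  -- from d² (ι w) = 0
  have hdωb : ι z * d ωb = -(ι w * (ω * ωb)) := by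
    have h0 := hdd (ι w)
    rw [h2, map_smul, hLeib (hι0 z) ωb, h1, pow_zero, one_smul, mul_assoc] at h0
    have h0' : (ι w * (ω * ωb) + ι z * d ωb) = 0 := by
      apply smul_right_injective Ω hk2ne
      simpa [smul_add] using h0
    linear_combination (norm := module) h0'
  -- derivative of squares
  have e2 : d (ι (w*w)) = ι (z*w) * ωb + ((q:ℂ)^2) • (ι (w*z) * ωb) := by
    rw [map_mul, hLeib (hι0 w) (ι w), h2, pow_zero, one_smul, smul_mul_assoc, mul_assoc,
      hωbw, map_mul ι z w, map_mul ι w z]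
    simp only [mul_smul_comm, smul_smul, smul_mul_assoc, mul_assoc]
    match_scalars <;> field_simp
  have e3 : d (ι (z*z)) = ι (z*w) * ω + ((q:ℂ)^2) • (ι (w*z) * ω) := by
    rw [map_mul, hLeib (hι0 z) (ι z), h1, pow_zero, one_smul]
    rw [mul_assoc, hωz, mul_smul_comm, ← mul_assoc, ← map_mul,
      ← mul_assoc, ← map_mul]
    abel
  have e1 : ((q:ℂ)^2) • d (ι (z*w)) = ι (w*w) * ω + ((q:ℂ)^4) • (ι (z*z) * ωb) := by
    rw [map_mul, hLeib (hι0 z) (ι w), h1, h2, pow_zero, one_smul, mul_assoc, hωw,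
      map_mul ι w w, map_mul ι z z]
    simp only [smul_add, smul_smul, mul_smul_comm, smul_mul_assoc, mul_assoc]
    match_scalars <;> field_simp <;> ring
  -- the key relation from d² (ι (z w)) = 0
  have hR : ι (z*w) * (ωb * ω) = -(((q:ℂ)^6) • (ι (w*z) * (ω * ωb))) := by
    have h0 : d (ι (w*w) * ω + ((q:ℂ)^4) • (ι (z*z) * ωb)) = 0 := by
      rw [← e1, map_smul, hdd, smul_zero]
    rw [map_add, map_smul, hLeib (hι0 (w*w)) ω, hLeib (hι0 (z*z)) ωb, e2, e3] at h0
    simp only [pow_zero, one_smul, map_mul, add_mul, smul_mul_assoc, mul_assoc] at h0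
    rw [hdω, hdωb] at h0
    simp only [mul_neg, mul_smul_comm, smul_neg, smul_smul, smul_add] at h0
    rw [map_mul, map_mul, mul_assoc, mul_assoc]
    linear_combination (norm := module) h0
  -- image of the quantum disc relation
  have hwz : ι (w*z) = ((q:ℂ)^2) • ι (z*w) + ((1:ℂ) - (q:ℂ)^2) • (1:Ω) := by
    have h := congrArg ι hzw
    rw [map_sub, map_smul, map_smul, map_one] at h
    linear_combination (norm := module) h
  have h6ne : ((q:ℂ)^6) ≠ 0 := pow_ne_zero 6 hkne
  -- key identity : ι(z w) v = ω ωb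
  have hkey : ι (z*w) * v = ω * ωb := by
    rw [hv, mul_smul_comm, mul_add, mul_smul_comm, hR, hwz, add_mul, smul_mul_assoc,
      smul_mul_assoc, one_mul]
    match_scalars <;> field_simp <;> ring
  have hg1 : ω * ωb = ι (1 - x) * v := by
    rw [hx, sub_sub_cancel (1:A) (z*w), hkey]
  have hg2 : ωb * ω = ((q:ℂ)^6) • (ι (((q:ℂ)^2) • x - 1) * v) := by
    have hι' : ι (((q:ℂ)^2) • ((1:A) - z*w) - (1:A))
        = ((q:ℂ)^2 - 1) • (1:Ω) - ((q:ℂ)^2) • ι (z*w) := by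
      rw [map_sub, map_smul, map_sub, map_one]
      module
    rw [hx, hι', sub_mul, smul_mul_assoc, smul_mul_assoc, one_mul, hkey, hv]
    match_scalars <;> field_simp <;> ring
  refine ⟨hg1, hg2, ⟨1 - x, hg1⟩, ⟨((q:ℂ)^6) • (((q:ℂ)^2) • x - 1), ?_⟩⟩
  rw [map_smul, smul_mul_assoc]
  exact hg2
end

section
/- The following identity holds in Ω²: w³ ω² = −(q⁸/(q⁴ + 1)) z (ω̄ ω + q⁴ ω ω̄). -/
/-!
Write `Q = q²` and work in `Ω` with the images of `z` and `w`. The degree-zero Leibniz rule and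
`d² = 0` give `d (dx · η) = -(dx · dη)`, so applying `d` to the commutation rules
`dz · z = Q² z dz + Q(1-Q) ω`, `dz · w = Q⁻¹ w dz` and `dz · zw = Q zw dz + (1-Q) dz` yields the
two-form relations `Q(1-Q) dω = -(Q²+1) dz dz`, `dw dz = -Q dz dw` and
`(Q²+1) w dz dz = -Q³(1-Q) ω dw`. Multiplying the first by `w` and using `w dω = -dw ω`
(from `d² z = 0`) expresses `w dz dz = Q⁻¹ w³ω²` a second time, now through `z ω̄ ω` instead of
`z ω ω̄`; eliminating `w dz dz` between the two expressions gives the identity.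
-/

section LeibnizRule

variable {K Ω : Type*} [Semiring K] [Ring Ω] [Module K Ω] {d : Ω →ₗ[K] Ω} {x : Ω}

theorem d_mul_d_of_leibniz (hx : ∀ η, d (x * η) = d x * η + x * d η)
    (hd : ∀ ξ, d (d ξ) = 0) (η : Ω) : d (x * d η) = d x * d η := by
  rw [hx, hd, mul_zero, add_zero]

theorem d_d_mul_of_leibniz (hx : ∀ η, d (x * η) = d x * η + x * d η)
    (hd : ∀ ξ, d (d ξ) = 0) (η : Ω) : d (d x * η) = -(d x * d η) := by
  rw [eq_sub_of_add_eq (hx η).symm, map_sub, hd, d_mul_d_of_leibniz hx hd, zero_sub]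

end LeibnizRule

/-- `z`, `w` stand for the images of the generators of the quantum disc in the differential
calculus `(Ω, d)` and `Q` for `q²`. -/
structure IsQuantumDiscCalculus {K Ω : Type*} [Field K] [Ring Ω] [Algebra K Ω]
    (Q : K) (d : Ω →ₗ[K] Ω) (z w ω ωb : Ω) : Prop where
  w_mul_z : w * z = Q • (z * w) + (1 - Q) • 1
  ω_mul_z : ω * z = Q • (z * ω)
  ω_mul_w : ω * w = Q⁻¹ • (w * ω)
  d_z : d z = w * ω
  d_w : d w = Q • (z * ωb)
  d_z_mul : ∀ η, d (z * η) = d z * η + z * d η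
  d_w_mul : ∀ η, d (w * η) = d w * η + w * d η
  d_d : ∀ ξ, d (d ξ) = 0

namespace IsQuantumDiscCalculus

variable {K Ω : Type*} [Field K] [Ring Ω] [Algebra K Ω] {Q : K} {d : Ω →ₗ[K] Ω} {z w ω ωb : Ω}

theorem d_z_mul_w_mul (h : IsQuantumDiscCalculus Q d z w ω ωb) (η : Ω) :
    d z * (w * η) = Q⁻¹ • (w * (d z * η)) := by
  rw [h.d_z, mul_assoc, ← mul_assoc ω, h.ω_mul_w, smul_mul_assoc, mul_smul_comm, mul_assoc]

theorem d_z_mul_w (h : IsQuantumDiscCalculus Q d z w ω ωb) : d z * w = Q⁻¹ • (w * d z) := by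
  simpa only [mul_one] using h.d_z_mul_w_mul 1

theorem d_z_mul_z_mul (h : IsQuantumDiscCalculus Q d z w ω ωb) (η : Ω) :
    d z * (z * η) = Q ^ 2 • (z * (d z * η)) + (Q * (1 - Q)) • (ω * η) := by
  rw [h.d_z, mul_assoc, ← mul_assoc ω, h.ω_mul_z, smul_mul_assoc, mul_smul_comm, ← mul_assoc w,
    ← mul_assoc w, h.w_mul_z]
  simp only [add_mul, smul_mul_assoc, one_mul, mul_assoc]
  module

theorem d_z_mul_z_mul_w (h : IsQuantumDiscCalculus Q d z w ω ωb) (hQ : Q ≠ 0) :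
    d z * (z * w) = Q • (z * (w * d z)) + (1 - Q) • d z := by
  rw [h.d_z_mul_z_mul, h.d_z_mul_w, h.ω_mul_w, ← h.d_z, mul_smul_comm, smul_smul, smul_smul]
  match_scalars <;> field_simp

theorem w_mul_d_ω (h : IsQuantumDiscCalculus Q d z w ω ωb) : w * d ω = -(d w * ω) := by
  have hddz := h.d_d z
  rw [h.d_z, h.d_w_mul] at hddz
  exact eq_neg_of_add_eq_zero_right hddz

theorem d_w_mul_d_z (h : IsQuantumDiscCalculus Q d z w ω ωb) (hQ : Q ≠ 0) :
    d w * d z = -(Q • (d z * d w)) := by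
  have hd := congrArg d h.d_z_mul_w
  rw [d_d_mul_of_leibniz h.d_z_mul h.d_d, map_smul, d_mul_d_of_leibniz h.d_w_mul h.d_d] at hd
  rw [← smul_neg, hd, smul_smul, mul_inv_cancel₀ hQ, one_smul]

theorem smul_d_ω (h : IsQuantumDiscCalculus Q d z w ω ωb) :
    (Q * (1 - Q)) • d ω = -((Q ^ 2 + 1) • (d z * d z)) := by
  have hd := congrArg d (h.d_z_mul_z_mul 1)
  rw [mul_one, mul_one, mul_one, d_d_mul_of_leibniz h.d_z_mul h.d_d, map_add, map_smul, map_smul,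
    d_mul_d_of_leibniz h.d_z_mul h.d_d] at hd
  linear_combination (norm := module) -hd

theorem smul_w_mul_d_z_mul_d_z_eq_d_w_mul_ω (h : IsQuantumDiscCalculus Q d z w ω ωb) :
    (Q ^ 2 + 1) • (w * (d z * d z)) = (Q * (1 - Q)) • (d w * ω) := by
  have hw := congrArg (w * ·) h.smul_d_ω
  simp only [mul_smul_comm, mul_neg, h.w_mul_d_ω] at hw
  linear_combination (norm := module) hw

theorem smul_w_mul_d_z_mul_d_z_eq_ω_mul_d_w (h : IsQuantumDiscCalculus Q d z w ω ωb)
    (hQ : Q ≠ 0) : (Q ^ 2 + 1) • (w * (d z * d z)) = -((Q ^ 3 * (1 - Q)) • (ω * d w)) := by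
  have hd := congrArg d (h.d_z_mul_z_mul_w hQ)
  rw [d_d_mul_of_leibniz h.d_z_mul h.d_d] at hd
  simp only [map_add, map_smul, h.d_z_mul, h.d_d, d_mul_d_of_leibniz h.d_w_mul h.d_d, smul_zero,
    add_zero, mul_add, mul_neg, mul_smul_comm, h.d_z_mul_w, h.d_z_mul_w_mul, h.d_z_mul_z_mul,
    h.d_w_mul_d_z hQ] at hd
  linear_combination (norm := skip) (-Q ^ 2) • hd
  match_scalars <;> field_simp <;> ring

theorem w_pow_three_mul_ω_sq_eq_smul (h : IsQuantumDiscCalculus Q d z w ω ωb) (hQ : Q ≠ 0) :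
    w ^ 3 * ω ^ 2 = Q • (w * (d z * d z)) := by
  nth_rewrite 2 [h.d_z]
  rw [h.d_z_mul_w_mul, h.d_z, mul_smul_comm, smul_smul, mul_inv_cancel₀ hQ, one_smul]
  noncomm_ring

theorem w_pow_three_mul_ω_sq (h : IsQuantumDiscCalculus Q d z w ω ωb) (hQ : Q ≠ 0)
    (hQ1 : Q ≠ 1) (hQ2 : Q ^ 2 + 1 ≠ 0) :
    w ^ 3 * ω ^ 2 = -(Q ^ 4 / (Q ^ 2 + 1)) • (z * (ωb * ω + Q ^ 2 • (ω * ωb))) := by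
  have hωbω := h.smul_w_mul_d_z_mul_d_z_eq_d_w_mul_ω
  have hωωb := h.smul_w_mul_d_z_mul_d_z_eq_ω_mul_d_w hQ
  rw [h.d_w, smul_mul_assoc, mul_assoc] at hωbω
  rw [h.d_w, mul_smul_comm, ← mul_assoc ω, h.ω_mul_z, smul_mul_assoc, mul_assoc] at hωωb
  have hQ1' : 1 - Q ≠ 0 := sub_ne_zero.mpr hQ1.symm
  rw [h.w_pow_three_mul_ω_sq_eq_smul hQ, mul_add, mul_smul_comm]
  linear_combination (norm := skip)
    (Q / ((Q ^ 2 + 1) * (1 - Q))) • hωωb - (Q ^ 2 / ((Q ^ 2 + 1) * (1 - Q))) • hωbω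
  match_scalars <;> field_simp <;> ring

end IsQuantumDiscCalculus

theorem w_cubed_omega_sq_general
    (q : ℝ) (hq0 : 0 < q) (hq1 : q < 1)
    {A : Type*} [Ring A] [Algebra ℂ A]
    (z w : A)
    (hzw : w * z - ((q : ℂ) ^ 2) • (z * w) = ((1 : ℂ) - (q : ℂ) ^ 2) • (1 : A))
    (σ : A ≃ₐ[ℂ] A) (hσz : σ z = ((q : ℂ) ^ 2) • z)
    (hσw : σ w = (((q : ℂ) ^ 2)⁻¹) • w)
    (D : A →ₗ[ℂ] A)
    (hDz : D z = w) (hDw : D w = 0)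
    (Db : A →ₗ[ℂ] A)
    (hDbz : Db z = 0) (hDbw : Db w = ((q : ℂ) ^ 2) • z)
    {Ω : Type*} [Ring Ω] [Algebra ℂ Ω]
    (𝒜 : ℕ → Submodule ℂ Ω)
    (ι : A →ₐ[ℂ] Ω)
    (hι0 : ∀ a : A, ι a ∈ 𝒜 0)
    (d : Ω →ₗ[ℂ] Ω)
    (hdd : ∀ ξ : Ω, d (d ξ) = 0)
    (hLeib : ∀ {n : ℕ} {ξ : Ω}, ξ ∈ 𝒜 n → ∀ η : Ω,
      d (ξ * η) = d ξ * η + ((-1 : ℂ) ^ n) • (ξ * d η))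
    (ω ωb : Ω)
    (hωcomm : ∀ a : A, ω * ι a = ι (σ a) * ω)
    (hda : ∀ a : A, d (ι a) = ι (D a) * ω + ι (Db a) * ωb)
    :
    ι (w ^ 3) * ω ^ 2 =
      (-((q : ℂ) ^ 8 / ((q : ℂ) ^ 4 + 1))) • (ι z * (ωb * ω + ((q : ℂ) ^ 4) • (ω * ωb))) := by
  have hQ : (q : ℂ) ^ 2 ≠ 0 := pow_ne_zero 2 (by exact_mod_cast hq0.ne')
  have hQ1 : (q : ℂ) ^ 2 ≠ 1 := by exact_mod_cast (by nlinarith : q ^ 2 < 1).ne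
  have hQ2 : ((q : ℂ) ^ 2) ^ 2 + 1 ≠ 0 := by exact_mod_cast (by positivity : (q ^ 2) ^ 2 + 1 ≠ 0)
  have hleib (a : A) (η : Ω) : d (ι a * η) = d (ι a) * η + ι a * d η := by
    simpa using hLeib (hι0 a) η
  have hdisc : IsQuantumDiscCalculus ((q : ℂ) ^ 2) d (ι z) (ι w) ω ωb :=
    { w_mul_z := by
        simpa only [map_sub, map_mul, map_smul, map_one, sub_eq_iff_eq_add'] using congrArg ι hzw
      ω_mul_z := by rw [hωcomm, hσz, map_smul, smul_mul_assoc]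
      ω_mul_w := by rw [hωcomm, hσw, map_smul, smul_mul_assoc]
      d_z := by rw [hda, hDz, hDbz, map_zero, zero_mul, add_zero]
      d_w := by rw [hda, hDw, hDbw, map_zero, zero_mul, zero_add, map_smul, smul_mul_assoc]
      d_z_mul := hleib z
      d_w_mul := hleib w
      d_d := hdd }
  rw [map_pow, hdisc.w_pow_three_mul_ω_sq hQ hQ1 hQ2, ← pow_mul, ← pow_mul]

theorem w_cubed_omega_sq
    (q : ℝ) (hq0 : 0 < q) (hq1 : q < 1)
    {A : Type*} [Ring A] [Algebra ℂ A]
    (z w : A)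
    (hzw : w * z - ((q : ℂ) ^ 2) • (z * w) = ((1 : ℂ) - (q : ℂ) ^ 2) • (1 : A))
    (x : A) (hx : x = 1 - z * w)
    (σ : A ≃ₐ[ℂ] A) (hσz : σ z = ((q : ℂ) ^ 2) • z)
    (hσw : σ w = (((q : ℂ) ^ 2)⁻¹) • w)
    (D : A →ₗ[ℂ] A)
    (hD : ∀ a b : A, D (a * b) = D a * σ b + a * D b)
    (hDz : D z = w) (hDw : D w = 0)
    (Db : A →ₗ[ℂ] A)
    (hDb : ∀ a b : A, Db (a * b) = Db a * σ b + a * Db b)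
    (hDbz : Db z = 0) (hDbw : Db w = ((q : ℂ) ^ 2) • z)
    {Ω : Type*} [Ring Ω] [Algebra ℂ Ω]
    (𝒜 : ℕ → Submodule ℂ Ω)
    (hmul : ∀ {m n : ℕ} {ξ η : Ω}, ξ ∈ 𝒜 m → η ∈ 𝒜 n → ξ * η ∈ 𝒜 (m + n))
    (ι : A →ₐ[ℂ] Ω) (hι : Function.Injective ι)
    (hι0 : ∀ a : A, ι a ∈ 𝒜 0) (hι0' : ∀ u ∈ 𝒜 0, ∃ a : A, ι a = u)
    (d : Ω →ₗ[ℂ] Ω)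
    (hdeg : ∀ {n : ℕ} {ξ : Ω}, ξ ∈ 𝒜 n → d ξ ∈ 𝒜 (n + 1))
    (hdd : ∀ ξ : Ω, d (d ξ) = 0)
    (hLeib : ∀ {n : ℕ} {ξ : Ω}, ξ ∈ 𝒜 n → ∀ η : Ω,
      d (ξ * η) = d ξ * η + ((-1 : ℂ) ^ n) • (ξ * d η))
    (ω ωb : Ω) (hω : ω ∈ 𝒜 1) (hωb : ωb ∈ 𝒜 1)
    (hωcomm : ∀ a : A, ω * ι a = ι (σ a) * ω)
    (hωbcomm : ∀ a : A, ωb * ι a = ι (σ a) * ωb)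
    (hda : ∀ a : A, d (ι a) = ι (D a) * ω + ι (Db a) * ωb)
    :
    ι (w ^ 3) * ω ^ 2 =
      (-((q : ℂ) ^ 8 / ((q : ℂ) ^ 4 + 1))) • (ι z * (ωb * ω + ((q : ℂ) ^ 4) • (ω * ωb))) :=
  w_cubed_omega_sq_general q hq0 hq1 z w hzw σ hσz hσw D hDz hDw Db hDbz hDbw 𝒜 ι hι0 d hdd hLeib ω
    ωb hωcomm hda
end

section
/- The following two identities hold in Ω²: (1 − x)(1 − q⁻² x)(1 − q⁻⁴ x) ω² = −(q⁸/(q⁴ + 1)) z⁴ (ω̄ ω + q⁴ ω ω̄) and (1 − q² x)(1 − q⁴ x)(1 − q⁶ x) ω² = −(q⁸/(q⁴ + 1)) z⁴ (ω̄ ω + q⁴ ω ω̄). -/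
/-!
Applying `d` to `d z = w ω` (using `d² = 0`) and to `ω z = q² z ω` computes `w · dω` and `dω · z`;
multiplying the latter by `w` and using `w z = q² z w + (1 - q²)` isolates `q² (1 - q²) dω`, so `dω`
is a multiple of `w² ω²`. Applying `d` to `ω w = q⁻² w ω` then makes `w³ ω²` a multiple of
`z (ω̄ ω + q⁴ ω ω̄)`. The left-hand sides are `ι (z³ w³) ω²` and `ι (w³ z³) ω²`, since `z³ w³` and
`w³ z³` are the two cubic polynomials in `x = 1 - z w`; in `w³ z³ ω²`, both `ω²` and
`ω̄ ω + q⁴ ω ω̄` q-commute past `z³` with the same factor `q¹²`.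
-/

def QCommute {𝕜 R : Type*} [SMul 𝕜 R] [Mul R] (c : 𝕜) (a b : R) : Prop :=
  a * b = c • (b * a)

namespace QCommute

variable {𝕜 R : Type*} [CommSemiring 𝕜] [Semiring R] [Algebra 𝕜 R] {c c' : 𝕜} {a a' b : R}

theorem eq (h : QCommute c a b) : a * b = c • (b * a) := h

theorem left_comm (h : QCommute c a b) (t : R) : a * (b * t) = c • (b * (a * t)) := by
  rw [← mul_assoc, h, smul_mul_assoc, mul_assoc]

theorem mul_left (h : QCommute c a b) (h' : QCommute c' a' b) :
    QCommute (c * c') (a * a') b := by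
  rw [QCommute, mul_assoc, h', mul_smul_comm, ← mul_assoc, h, smul_mul_assoc, smul_smul,
    mul_comm c', mul_assoc]

theorem pow_left (h : QCommute c a b) (n : ℕ) : QCommute (c ^ n) (a ^ n) b := by
  induction n with
  | zero => simp [QCommute]
  | succ n ih => rw [pow_succ, pow_succ]; exact ih.mul_left h

theorem pow_right (h : QCommute c a b) (n : ℕ) : QCommute (c ^ n) a (b ^ n) := by
  induction n with
  | zero => simp [QCommute]
  | succ n ih =>
    rw [QCommute, pow_succ, ← mul_assoc, ih, smul_mul_assoc, mul_assoc, h, mul_smul_comm,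
      smul_smul, pow_succ, mul_assoc]

theorem add_left (h : QCommute c a b) (h' : QCommute c a' b) : QCommute c (a + a') b := by
  rw [QCommute, add_mul, mul_add, smul_add, h, h']

theorem smul_left (h : QCommute c a b) (t : 𝕜) : QCommute c (t • a) b := by
  rw [QCommute, smul_mul_assoc, h, mul_smul_comm, smul_comm]

end QCommute

theorem QCommute.symm {𝕜 R : Type*} [Semifield 𝕜] [Semiring R] [Algebra 𝕜 R] {c : 𝕜} {a b : R}
    (h : QCommute c a b) (hc : c ≠ 0) : QCommute c⁻¹ b a := by
  rw [QCommute, h, inv_smul_smul₀ hc]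

section QuantumDisc

variable {𝕜 A : Type*} [Field 𝕜] [Ring A] [Algebra 𝕜 A] {q : 𝕜} {z w x : A}

theorem w_mul_z_eq (hzw : w * z - q ^ 2 • (z * w) = (1 - q ^ 2) • (1 : A))
    (hx : x = 1 - z * w) : w * z = 1 - q ^ 2 • x := by
  rw [sub_eq_iff_eq_add] at hzw
  rw [hzw, hx]
  module

theorem qCommute_x_z (hzw : w * z - q ^ 2 • (z * w) = (1 - q ^ 2) • (1 : A))
    (hx : x = 1 - z * w) : QCommute (q ^ 2) x z :=
  calc x * z = z - z * (w * z) := by rw [hx, sub_mul, one_mul, mul_assoc]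
    _ = q ^ 2 • (z * x) := by
      rw [w_mul_z_eq hzw hx, mul_sub, mul_one, mul_smul_comm, sub_sub_cancel]

theorem qCommute_w_x (hzw : w * z - q ^ 2 • (z * w) = (1 - q ^ 2) • (1 : A))
    (hx : x = 1 - z * w) : QCommute (q ^ 2) w x :=
  calc w * x = w - (w * z) * w := by rw [hx, mul_sub, mul_one, mul_assoc]
    _ = q ^ 2 • (x * w) := by
      rw [w_mul_z_eq hzw hx, sub_mul, one_mul, smul_mul_assoc, sub_sub_cancel]

theorem z_pow_succ_mul_w_pow_succ (hzw : w * z - q ^ 2 • (z * w) = (1 - q ^ 2) • (1 : A))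
    (hx : x = 1 - z * w) (hq : q ≠ 0) (n : ℕ) :
    z ^ (n + 1) * w ^ (n + 1) = z ^ n * w ^ n * (1 - ((q ^ 2)⁻¹) ^ n • x) := by
  have hxw := ((qCommute_w_x hzw hx).symm (pow_ne_zero 2 hq)).pow_right n
  calc z ^ (n + 1) * w ^ (n + 1) = z ^ n * ((1 - x) * w ^ n) := by
        rw [pow_succ, pow_succ', hx, sub_sub_cancel]; simp only [mul_assoc]
    _ = z ^ n * w ^ n * (1 - ((q ^ 2)⁻¹) ^ n • x) := by
        simp only [sub_mul, mul_sub, one_mul, mul_one, hxw.eq, mul_smul_comm, mul_assoc, inv_pow]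

theorem w_pow_succ_mul_z_pow_succ (hzw : w * z - q ^ 2 • (z * w) = (1 - q ^ 2) • (1 : A))
    (hx : x = 1 - z * w) (n : ℕ) :
    w ^ (n + 1) * z ^ (n + 1) = w ^ n * z ^ n * (1 - (q ^ 2) ^ (n + 1) • x) := by
  have hxz := (qCommute_x_z hzw hx).pow_right n
  calc w ^ (n + 1) * z ^ (n + 1) = w ^ n * ((1 - q ^ 2 • x) * z ^ n) := by
        rw [pow_succ, pow_succ', ← w_mul_z_eq hzw hx]; simp only [mul_assoc]
    _ = w ^ n * z ^ n * (1 - (q ^ 2) ^ (n + 1) • x) := by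
        simp only [sub_mul, mul_sub, one_mul, mul_one, smul_mul_assoc, hxz.eq, mul_smul_comm,
          smul_smul, mul_assoc, ← pow_succ']

theorem z_pow_three_mul_w_pow_three (hzw : w * z - q ^ 2 • (z * w) = (1 - q ^ 2) • (1 : A))
    (hx : x = 1 - z * w) (hq : q ≠ 0) :
    z ^ 3 * w ^ 3 = (1 - x) * (1 - (q ^ 2)⁻¹ • x) * (1 - (q ^ 4)⁻¹ • x) := by
  rw [z_pow_succ_mul_w_pow_succ hzw hx hq 2, z_pow_succ_mul_w_pow_succ hzw hx hq 1,
    z_pow_succ_mul_w_pow_succ hzw hx hq 0]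
  simp only [pow_zero, mul_one, one_smul, pow_one, one_mul, inv_pow, ← pow_mul]

theorem w_pow_three_mul_z_pow_three (hzw : w * z - q ^ 2 • (z * w) = (1 - q ^ 2) • (1 : A))
    (hx : x = 1 - z * w) :
    w ^ 3 * z ^ 3 = (1 - q ^ 2 • x) * (1 - q ^ 4 • x) * (1 - q ^ 6 • x) := by
  rw [w_pow_succ_mul_z_pow_succ hzw hx 2, w_pow_succ_mul_z_pow_succ hzw hx 1,
    w_pow_succ_mul_z_pow_succ hzw hx 0]
  simp only [pow_zero, mul_one, zero_add, pow_one, one_mul, ← pow_mul]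

end QuantumDisc

structure QDiscCalculus {𝕜 Ω : Type*} [Field 𝕜] [Ring Ω] [Algebra 𝕜 Ω]
    (q : 𝕜) (z w ω ωb : Ω) (d : Ω →ₗ[𝕜] Ω) : Prop where
  w_mul_z : w * z = q ^ 2 • (z * w) + (1 - q ^ 2) • 1
  omega_z : QCommute (q ^ 2) ω z
  omega_w : QCommute (q ^ 2)⁻¹ ω w
  omegaBar_z : QCommute (q ^ 2) ωb z
  d_z : d z = w * ω
  d_w : d w = q ^ 2 • (z * ωb)
  d_d_z : d (d z) = 0
  d_z_mul (η : Ω) : d (z * η) = d z * η + z * d η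
  d_w_mul (η : Ω) : d (w * η) = d w * η + w * d η
  d_omega_mul (η : Ω) : d (ω * η) = d ω * η - ω * d η

namespace QDiscCalculus

variable {𝕜 Ω : Type*} [Field 𝕜] [Ring Ω] [Algebra 𝕜 Ω] {q : 𝕜} {z w ω ωb : Ω}
  {d : Ω →ₗ[𝕜] Ω}

theorem w_mul_d_omega (h : QDiscCalculus q z w ω ωb d) :
    w * d ω = (-q ^ 2) • (z * (ωb * ω)) := by
  have := h.d_d_z
  rw [h.d_z, h.d_w_mul, h.d_w, smul_mul_assoc, mul_assoc] at this
  linear_combination (norm := module) this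

theorem d_omega_mul_z (h : QDiscCalculus q z w ω ωb d) :
    d ω * z = q ^ 2 • (z * d ω) + (q ^ 2 + (q ^ 2)⁻¹) • (w * ω ^ 2) := by
  have := congrArg d h.omega_z.eq
  rw [h.d_omega_mul, map_smul, h.d_z_mul, h.d_z, ← mul_assoc, h.omega_w.eq] at this
  simp only [smul_mul_assoc, mul_assoc, sq] at this ⊢
  linear_combination (norm := module) this

theorem d_omega_eq (h : QDiscCalculus q z w ω ωb d) (hq : q ≠ 0) (hq1 : q ^ 2 ≠ 1) :
    d ω = (-(q ^ 4 + 1) / (q ^ 4 * (1 - q ^ 2))) • (w ^ 2 * ω ^ 2) := by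
  have hωbω : QCommute (q ^ 4) (ωb * ω) z := by
    simpa only [← pow_add] using h.omegaBar_z.mul_left h.omega_z
  have e₁ : w * (d ω * z) = (-q ^ 6) • (z ^ 2 * (ωb * ω)) := by
    rw [← mul_assoc, h.w_mul_d_omega, smul_mul_assoc, mul_assoc, hωbω.eq]
    simp only [mul_smul_comm, smul_smul, sq, mul_assoc]
    ring_nf
  have e₂ : w * (d ω * z) = q ^ 4 • (z * (w * d ω)) + (q ^ 2 * (1 - q ^ 2)) • d ω
      + (q ^ 2 + (q ^ 2)⁻¹) • (w ^ 2 * ω ^ 2) := by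
    rw [h.d_omega_mul_z, mul_add, mul_smul_comm, mul_smul_comm, ← mul_assoc w z, h.w_mul_z]
    simp only [add_mul, smul_mul_assoc, one_mul, mul_assoc, sq]
    module
  rw [h.w_mul_d_omega] at e₂
  have hc : q ^ 2 * (1 - q ^ 2) ≠ 0 := mul_ne_zero (pow_ne_zero 2 hq) (sub_ne_zero.2 hq1.symm)
  have key : (q ^ 2 * (1 - q ^ 2)) • d ω = (-(q ^ 2 + (q ^ 2)⁻¹)) • (w ^ 2 * ω ^ 2) := by
    simp only [sq, mul_assoc, mul_smul_comm] at e₁ e₂ ⊢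
    linear_combination (norm := module) e₁ - e₂
  rw [← inv_smul_smul₀ hc (d ω), key, smul_smul]
  congr 1
  field_simp

theorem w_pow_three_mul_omega_sq (h : QDiscCalculus q z w ω ωb d) (hq : q ≠ 0) (hq1 : q ^ 2 ≠ 1)
    (hq4 : q ^ 4 + 1 ≠ 0) :
    w ^ 3 * ω ^ 2 = (-(q ^ 8 / (q ^ 4 + 1))) • (z * (ωb * ω + q ^ 4 • (ω * ωb))) := by
  have e := congrArg d h.omega_w.eq
  rw [h.d_omega_mul, map_smul, h.d_w_mul, h.d_w, h.d_omega_eq hq hq1, smul_mul_assoc, mul_assoc,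
    (h.omega_w.pow_left 2).eq] at e
  have key : (-(q ^ 4 + 1) / q ^ 8) • (w ^ 3 * ω ^ 2) = z * (ωb * ω + q ^ 4 • (ω * ωb)) := by
    simp only [pow_succ, pow_zero, one_mul, mul_assoc, smul_mul_assoc, mul_smul_comm, mul_add,
      h.omega_z.left_comm] at e ⊢
    linear_combination (norm := skip) e
    match_scalars <;> field_simp <;> ring
  rw [← key, smul_smul, show -(q ^ 8 / (q ^ 4 + 1)) * (-(q ^ 4 + 1) / q ^ 8) = 1 by field_simp,
    one_smul]

theorem z_pow_three_mul_w_pow_three_mul_omega_sq (h : QDiscCalculus q z w ω ωb d) (hq : q ≠ 0)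
    (hq1 : q ^ 2 ≠ 1) (hq4 : q ^ 4 + 1 ≠ 0) :
    z ^ 3 * w ^ 3 * ω ^ 2 = (-(q ^ 8 / (q ^ 4 + 1))) • (z ^ 4 * (ωb * ω + q ^ 4 • (ω * ωb))) := by
  rw [mul_assoc, h.w_pow_three_mul_omega_sq hq hq1 hq4, mul_smul_comm, ← mul_assoc, ← pow_succ]

theorem w_pow_three_mul_z_pow_three_mul_omega_sq (h : QDiscCalculus q z w ω ωb d) (hq : q ≠ 0)
    (hq1 : q ^ 2 ≠ 1) (hq4 : q ^ 4 + 1 ≠ 0) :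
    w ^ 3 * z ^ 3 * ω ^ 2 = (-(q ^ 8 / (q ^ 4 + 1))) • (z ^ 4 * (ωb * ω + q ^ 4 • (ω * ωb))) := by
  have hθ : QCommute (q ^ 4) (ωb * ω + q ^ 4 • (ω * ωb)) z := by
    simpa only [← pow_add] using
      (h.omegaBar_z.mul_left h.omega_z).add_left ((h.omega_z.mul_left h.omegaBar_z).smul_left _)
  have hω : QCommute (q ^ 12) (ω ^ 2) (z ^ 3) := by
    simpa only [← pow_mul] using (h.omega_z.pow_left 2).pow_right 3
  calc w ^ 3 * z ^ 3 * ω ^ 2 = (q ^ 12)⁻¹ • (w ^ 3 * ω ^ 2 * z ^ 3) := by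
        rw [mul_assoc, (hω.symm (pow_ne_zero 12 hq)).eq, mul_smul_comm, mul_assoc]
    _ = (-(q ^ 8 / (q ^ 4 + 1))) • (z ^ 4 * (ωb * ω + q ^ 4 • (ω * ωb))) := by
        rw [h.w_pow_three_mul_omega_sq hq hq1 hq4, smul_mul_assoc, mul_assoc, (hθ.pow_right 3).eq,
          mul_smul_comm, smul_smul, smul_smul, ← mul_assoc z, ← pow_succ']
        congr 1
        field_simp

end QDiscCalculus

theorem omega_sq_polynomial_identities_general
    (q : ℝ) (hq0 : 0 < q) (hq1 : q < 1)
    {A : Type*} [Ring A] [Algebra ℂ A]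
    (z w : A)
    (hzw : w * z - ((q : ℂ) ^ 2) • (z * w) = ((1 : ℂ) - (q : ℂ) ^ 2) • (1 : A))
    (x : A) (hx : x = 1 - z * w)
    (σ : A ≃ₐ[ℂ] A) (hσz : σ z = ((q : ℂ) ^ 2) • z)
    (hσw : σ w = (((q : ℂ) ^ 2)⁻¹) • w)
    (D : A →ₗ[ℂ] A)
    (hDz : D z = w) (hDw : D w = 0)
    (Db : A →ₗ[ℂ] A)
    (hDbz : Db z = 0) (hDbw : Db w = ((q : ℂ) ^ 2) • z)
    {Ω : Type*} [Ring Ω] [Algebra ℂ Ω]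
    (𝒜 : ℕ → Submodule ℂ Ω)
    (ι : A →ₐ[ℂ] Ω)
    (hι0 : ∀ a : A, ι a ∈ 𝒜 0)
    (d : Ω →ₗ[ℂ] Ω)
    (hdd : ∀ ξ : Ω, d (d ξ) = 0)
    (hLeib : ∀ {n : ℕ} {ξ : Ω}, ξ ∈ 𝒜 n → ∀ η : Ω,
      d (ξ * η) = d ξ * η + ((-1 : ℂ) ^ n) • (ξ * d η))
    (ω ωb : Ω) (hω : ω ∈ 𝒜 1)
    (hωcomm : ∀ a : A, ω * ι a = ι (σ a) * ω)
    (hωbcomm : ∀ a : A, ωb * ι a = ι (σ a) * ωb)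
    (hda : ∀ a : A, d (ι a) = ι (D a) * ω + ι (Db a) * ωb)
    :
    ι ((1 - x) * (1 - (((q : ℂ) ^ 2)⁻¹) • x) * (1 - (((q : ℂ) ^ 4)⁻¹) • x)) * ω ^ 2 =
      (-((q : ℂ) ^ 8 / ((q : ℂ) ^ 4 + 1))) • (ι (z ^ 4) * (ωb * ω + ((q : ℂ) ^ 4) • (ω * ωb))) ∧
    ι ((1 - ((q : ℂ) ^ 2) • x) * (1 - ((q : ℂ) ^ 4) • x) * (1 - ((q : ℂ) ^ 6) • x)) * ω ^ 2 =
      (-((q : ℂ) ^ 8 / ((q : ℂ) ^ 4 + 1))) • (ι (z ^ 4) * (ωb * ω + ((q : ℂ) ^ 4) • (ω * ωb))) := by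
  have hq : (q : ℂ) ≠ 0 := Complex.ofReal_ne_zero.2 hq0.ne'
  have hq2 : (q : ℂ) ^ 2 ≠ 1 := by
    exact_mod_cast (pow_lt_one₀ hq0.le hq1 two_ne_zero).ne
  have hq4 : (q : ℂ) ^ 4 + 1 ≠ 0 := by exact_mod_cast (by positivity : q ^ 4 + 1 ≠ 0)
  have hLeib₀ (a : A) (η : Ω) : d (ι a * η) = d (ι a) * η + ι a * d η := by
    rw [hLeib (hι0 a), pow_zero, one_smul]
  have hcomm {θ : Ω} (hθ : ∀ a, θ * ι a = ι (σ a) * θ) {a : A} {c : ℂ} (ha : σ a = c • a) :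
      QCommute c θ (ι a) := by
    rw [QCommute, hθ, ha, map_smul, smul_mul_assoc]
  have hc : QDiscCalculus (q : ℂ) (ι z) (ι w) ω ωb d :=
    { w_mul_z := by
        rw [← sub_eq_iff_eq_add', ← map_mul, ← map_mul, ← map_smul, ← map_sub, hzw, map_smul,
          map_one]
      omega_z := hcomm hωcomm hσz
      omega_w := hcomm hωcomm hσw
      omegaBar_z := hcomm hωbcomm hσz
      d_z := by rw [hda, hDz, hDbz, map_zero, zero_mul, add_zero]
      d_w := by rw [hda, hDw, hDbw, map_zero, zero_mul, zero_add, map_smul, smul_mul_assoc]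
      d_d_z := hdd _
      d_z_mul := hLeib₀ z
      d_w_mul := hLeib₀ w
      d_omega_mul := fun η => by rw [hLeib hω, pow_one, neg_one_smul, sub_eq_add_neg] }
  constructor
  · rw [← z_pow_three_mul_w_pow_three hzw hx hq, map_mul, map_pow, map_pow, map_pow]
    exact hc.z_pow_three_mul_w_pow_three_mul_omega_sq hq hq2 hq4
  · rw [← w_pow_three_mul_z_pow_three hzw hx, map_mul, map_pow, map_pow, map_pow]
    exact hc.w_pow_three_mul_z_pow_three_mul_omega_sq hq hq2 hq4

theorem omega_sq_polynomial_identities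
    (q : ℝ) (hq0 : 0 < q) (hq1 : q < 1)
    {A : Type*} [Ring A] [Algebra ℂ A]
    (z w : A)
    (hzw : w * z - ((q : ℂ) ^ 2) • (z * w) = ((1 : ℂ) - (q : ℂ) ^ 2) • (1 : A))
    (x : A) (hx : x = 1 - z * w)
    (σ : A ≃ₐ[ℂ] A) (hσz : σ z = ((q : ℂ) ^ 2) • z)
    (hσw : σ w = (((q : ℂ) ^ 2)⁻¹) • w)
    (D : A →ₗ[ℂ] A)
    (hD : ∀ a b : A, D (a * b) = D a * σ b + a * D b)
    (hDz : D z = w) (hDw : D w = 0)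
    (Db : A →ₗ[ℂ] A)
    (hDb : ∀ a b : A, Db (a * b) = Db a * σ b + a * Db b)
    (hDbz : Db z = 0) (hDbw : Db w = ((q : ℂ) ^ 2) • z)
    {Ω : Type*} [Ring Ω] [Algebra ℂ Ω]
    (𝒜 : ℕ → Submodule ℂ Ω)
    (hmul : ∀ {m n : ℕ} {ξ η : Ω}, ξ ∈ 𝒜 m → η ∈ 𝒜 n → ξ * η ∈ 𝒜 (m + n))
    (ι : A →ₐ[ℂ] Ω) (hι : Function.Injective ι)
    (hι0 : ∀ a : A, ι a ∈ 𝒜 0) (hι0' : ∀ u ∈ 𝒜 0, ∃ a : A, ι a = u)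
    (d : Ω →ₗ[ℂ] Ω)
    (hdeg : ∀ {n : ℕ} {ξ : Ω}, ξ ∈ 𝒜 n → d ξ ∈ 𝒜 (n + 1))
    (hdd : ∀ ξ : Ω, d (d ξ) = 0)
    (hLeib : ∀ {n : ℕ} {ξ : Ω}, ξ ∈ 𝒜 n → ∀ η : Ω,
      d (ξ * η) = d ξ * η + ((-1 : ℂ) ^ n) • (ξ * d η))
    (ω ωb : Ω) (hω : ω ∈ 𝒜 1) (hωb : ωb ∈ 𝒜 1)
    (hωcomm : ∀ a : A, ω * ι a = ι (σ a) * ω)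
    (hωbcomm : ∀ a : A, ωb * ι a = ι (σ a) * ωb)
    (hda : ∀ a : A, d (ι a) = ι (D a) * ω + ι (Db a) * ωb)
    :
    ι ((1 - x) * (1 - (((q : ℂ) ^ 2)⁻¹) • x) * (1 - (((q : ℂ) ^ 4)⁻¹) • x)) * ω ^ 2 =
      (-((q : ℂ) ^ 8 / ((q : ℂ) ^ 4 + 1))) • (ι (z ^ 4) * (ωb * ω + ((q : ℂ) ^ 4) • (ω * ωb))) ∧
    ι ((1 - ((q : ℂ) ^ 2) • x) * (1 - ((q : ℂ) ^ 4) • x) * (1 - ((q : ℂ) ^ 6) • x)) * ω ^ 2 =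
      (-((q : ℂ) ^ 8 / ((q : ℂ) ^ 4 + 1))) • (ι (z ^ 4) * (ωb * ω + ((q : ℂ) ^ 4) • (ω * ωb))) :=
  omega_sq_polynomial_identities_general q hq0 hq1 z w hzw x hx σ hσz hσw D hDz hDw Db hDbz hDbw 𝒜 ι
    hι0 d hdd hLeib ω ωb hω hωcomm hωbcomm hda
end

section
/- The following identities hold in Ω²: x ω² = 0 = ω² x and x ω̄² = 0 = ω̄² x. -/
/-!
Write `T = q²`, `Z, W` for `z, w` and `θ` for `ω̄`. Applying `d` to `ω Z = T Z ω` gives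
`dω Z = T Z dω + (T + T³) ω² W`, and `d² Z = d(W ω) = 0` gives `W dω = -T Z θ ω`. Multiplying the
first identity on the left by `W`, the `θ`-terms cancel and `(T - 1) dω = (T² + T⁴) ω² W²`.
Substituting this back into the first identity leaves `x ω² W = 0`, and multiplying on the right
by `Z` gives `(1 - T) x ω² = 0`. The identities for `ω̄` follow from the symmetry
`(Z, W, ω, θ, T) ↦ (W, Z, T θ, T ω, T⁻¹)`, and `ω`, `ω̄` commute with `x = 1 - Z W`.
-/

theorem mul_mul_of_mul_eq {M : Type*} [Semigroup M] {a b c : M} (h : a * b = c) (u : M) :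
    a * (b * u) = c * u := by
  rw [← mul_assoc, h]

namespace QuantumDisc

variable {K Ω : Type*} [Field K] [Ring Ω] [Algebra K Ω] {T : K} {Z W ω θ : Ω}

theorem commute_one_sub_mul (hωZ : ω * Z = T • (Z * ω)) (hWω : W * ω = T • (ω * W)) :
    Commute ω (1 - Z * W) := by
  refine (Commute.one_right ω).sub_right ?_
  change ω * (Z * W) = Z * W * ω
  rw [← mul_assoc, hωZ, mul_assoc Z, hWω, smul_mul_assoc, mul_smul_comm, mul_assoc]

theorem smul_mul_eq_inv_smul {a b : Ω} (hT0 : T ≠ 0) (h : a * b = T • (b * a)) (c : K) :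
    (c • b) * a = T⁻¹ • (a * (c • b)) := by
  rw [mul_smul_comm, h, smul_mul_assoc, smul_comm c, inv_smul_smul₀ hT0]

theorem mul_smul_eq_inv_smul {a b : Ω} (hT0 : T ≠ 0) (h : a * b = T • (b * a)) (c : K) :
    b * (c • a) = T⁻¹ • ((c • a) * b) := by
  rw [smul_mul_assoc, h, smul_comm c, inv_smul_smul₀ hT0, mul_smul_comm]

section Steps

variable (d : Ω →ₗ[K] Ω)

theorem d_ω_mul_Z (hωZ : ω * Z = T • (Z * ω)) (hWω : W * ω = T • (ω * W)) (hdZ : d Z = W * ω)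
    (hLZ : ∀ η, d (Z * η) = d Z * η + Z * d η) (hLω : ∀ η, d (ω * η) = d ω * η - ω * d η) :
    d ω * Z = T • (Z * d ω) + (T + T ^ 3) • (ω * (ω * W)) := by
  have h := hLω Z
  rw [hωZ, map_smul, hLZ, hdZ] at h
  linear_combination (norm := skip) -h
  simp only [smul_add, mul_smul_comm, smul_mul_assoc, smul_smul, mul_assoc, hWω]
  module

theorem W_mul_d_ω (hdZ : d Z = W * ω) (hdW : d W = T • (Z * θ)) (hdd : d (d Z) = 0)
    (hLW : ∀ η, d (W * η) = d W * η + W * d η) :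
    W * d ω = -(T • (Z * (θ * ω))) := by
  rw [hdZ, hLW, hdW, smul_mul_assoc, mul_assoc] at hdd
  exact eq_neg_of_add_eq_zero_right hdd

theorem sub_one_smul_d_ω (hT0 : T ≠ 0)
    (hWZ : W * Z = T • (Z * W) + (1 - T) • 1) (hωZ : ω * Z = T • (Z * ω))
    (hWω : W * ω = T • (ω * W)) (hθZ : θ * Z = T • (Z * θ))
    (h1 : d ω * Z = T • (Z * d ω) + (T + T ^ 3) • (ω * (ω * W)))
    (h2 : W * d ω = -(T • (Z * (θ * ω)))) :
    (T - 1) • d ω = (T ^ 2 + T ^ 4) • (ω * (ω * (W * W))) := by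
  apply smul_right_injective Ω hT0
  linear_combination (norm := skip) W * h1
  simp only [mul_add, add_mul, mul_sub, smul_add, mul_smul_comm, smul_mul_assoc, smul_smul,
    mul_one, one_mul, mul_assoc, smul_neg, neg_mul, mul_neg, mul_mul_of_mul_eq hWZ, hωZ,
    mul_mul_of_mul_eq hWω, mul_mul_of_mul_eq hθZ, h2, mul_mul_of_mul_eq h2]
  module

theorem one_sub_mul_mul_sq_mul_eq_zero (hT0 : T ≠ 0) (hT2 : T ^ 2 + 1 ≠ 0) (hT3 : T ^ 3 ≠ 1)
    (hWZ : W * Z = T • (Z * W) + (1 - T) • 1) (hωZ : ω * Z = T • (Z * ω))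
    (hWω : W * ω = T • (ω * W))
    (h1 : d ω * Z = T • (Z * d ω) + (T + T ^ 3) • (ω * (ω * W)))
    (h3 : (T - 1) • d ω = (T ^ 2 + T ^ 4) • (ω * (ω * (W * W)))) :
    (1 - Z * W) * ω ^ 2 * W = 0 := by
  have hc : T * (T ^ 2 + 1) * (T ^ 3 - 1) ≠ 0 := by
    have := sub_ne_zero.mpr hT3
    positivity
  rw [← smul_eq_zero_iff_right hc]
  linear_combination (norm := skip) h3 * Z - T • (Z * h3) - (T - 1) • h1
  simp only [mul_add, add_mul, mul_sub, sub_mul, smul_add, smul_sub, mul_smul_comm, smul_mul_assoc,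
    smul_smul, mul_one, one_mul, mul_assoc, sq, hWZ, mul_mul_of_mul_eq hWZ, mul_mul_of_mul_eq hωZ,
    hWω, mul_mul_of_mul_eq hWω]
  module

end Steps

theorem one_sub_mul_mul_sq_eq_zero_of_mul_right (hT3 : T ^ 3 ≠ 1)
    (hWZ : W * Z = T • (Z * W) + (1 - T) • 1) (hωZ : ω * Z = T • (Z * ω))
    (hWω : W * ω = T • (ω * W)) (h4 : (1 - Z * W) * ω ^ 2 * W = 0) :
    (1 - Z * W) * ω ^ 2 = 0 := by
  have hT1 : 1 - T ≠ 0 := sub_ne_zero.mpr fun h => hT3 (by rw [← h, one_pow])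
  rw [← smul_eq_zero_iff_right hT1]
  linear_combination (norm := skip) h4 * Z - T ^ 4 • (Z * h4)
  simp only [zero_mul, mul_zero, mul_add, add_mul, mul_sub, sub_mul, smul_add, smul_sub,
    mul_smul_comm, smul_mul_assoc, smul_smul, mul_one, one_mul, mul_assoc, sq, hWZ,
    mul_mul_of_mul_eq hWZ, mul_mul_of_mul_eq hωZ, hWω, mul_mul_of_mul_eq hWω]
  module

/-- `Z, W, ω, θ` stand for `z, w, ω, ω̄` and `T` for `q²`; the rules `ω a = σ(a) ω` for `a = w`
are written as `W ω = T ω W`, so that no `T⁻¹` appears. -/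
structure IsDiscCalculus (T : K) (d : Ω →ₗ[K] Ω) (Z W ω θ : Ω) : Prop where
  W_mul_Z : W * Z = T • (Z * W) + (1 - T) • 1
  ω_mul_Z : ω * Z = T • (Z * ω)
  W_mul_ω : W * ω = T • (ω * W)
  θ_mul_Z : θ * Z = T • (Z * θ)
  W_mul_θ : W * θ = T • (θ * W)
  d_Z : d Z = W * ω
  d_W : d W = T • (Z * θ)
  d_d_Z : d (d Z) = 0
  d_d_W : d (d W) = 0
  d_Z_mul : ∀ η, d (Z * η) = d Z * η + Z * d η
  d_W_mul : ∀ η, d (W * η) = d W * η + W * d η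
  d_ω_mul : ∀ η, d (ω * η) = d ω * η - ω * d η
  d_θ_mul : ∀ η, d (θ * η) = d θ * η - θ * d η

namespace IsDiscCalculus

variable {d : Ω →ₗ[K] Ω}

theorem one_sub_mul_mul_ω_sq_eq_zero (h : IsDiscCalculus T d Z W ω θ)
    (hT0 : T ≠ 0) (hT2 : T ^ 2 + 1 ≠ 0) (hT3 : T ^ 3 ≠ 1) : (1 - Z * W) * ω ^ 2 = 0 := by
  have h1 := d_ω_mul_Z d h.ω_mul_Z h.W_mul_ω h.d_Z h.d_Z_mul h.d_ω_mul
  have h2 := W_mul_d_ω d h.d_Z h.d_W h.d_d_Z h.d_W_mul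
  have h3 := sub_one_smul_d_ω d hT0 h.W_mul_Z h.ω_mul_Z h.W_mul_ω h.θ_mul_Z h1 h2
  exact one_sub_mul_mul_sq_eq_zero_of_mul_right hT3 h.W_mul_Z h.ω_mul_Z h.W_mul_ω
    (one_sub_mul_mul_sq_mul_eq_zero d hT0 hT2 hT3 h.W_mul_Z h.ω_mul_Z h.W_mul_ω h1 h3)

theorem swap (h : IsDiscCalculus T d Z W ω θ) (hT0 : T ≠ 0) :
    IsDiscCalculus T⁻¹ d W Z (T • θ) (T • ω) where
  W_mul_Z := by
    rw [h.W_mul_Z, smul_add, inv_smul_smul₀ hT0, smul_smul, mul_sub, inv_mul_cancel₀ hT0, mul_one]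
    module
  ω_mul_Z := smul_mul_eq_inv_smul hT0 h.W_mul_θ T
  W_mul_ω := mul_smul_eq_inv_smul hT0 h.θ_mul_Z T
  θ_mul_Z := smul_mul_eq_inv_smul hT0 h.W_mul_ω T
  W_mul_θ := mul_smul_eq_inv_smul hT0 h.ω_mul_Z T
  d_Z := by rw [h.d_W, mul_smul_comm]
  d_W := by rw [h.d_Z, mul_smul_comm, inv_smul_smul₀ hT0]
  d_d_Z := h.d_d_W
  d_d_W := h.d_d_Z
  d_Z_mul := h.d_W_mul
  d_W_mul := h.d_Z_mul
  d_ω_mul η := by simp only [smul_mul_assoc, map_smul, h.d_θ_mul, smul_sub]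
  d_θ_mul η := by simp only [smul_mul_assoc, map_smul, h.d_ω_mul, smul_sub]

theorem one_sub_mul_mul_θ_sq_eq_zero (h : IsDiscCalculus T d Z W ω θ)
    (hT0 : T ≠ 0) (hT2 : T ^ 2 + 1 ≠ 0) (hT3 : T ^ 3 ≠ 1) : (1 - Z * W) * θ ^ 2 = 0 := by
  have hT2' : T⁻¹ ^ 2 + 1 ≠ 0 := by
    field_simp
    exact div_ne_zero (by rwa [add_comm]) (pow_ne_zero 2 hT0)
  have hT3' : T⁻¹ ^ 3 ≠ 1 := by rwa [inv_pow, Ne, inv_eq_one]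
  have hWZ : 1 - W * Z = T • (1 - Z * W) := by rw [h.W_mul_Z]; module
  have key := (h.swap hT0).one_sub_mul_mul_ω_sq_eq_zero (inv_ne_zero hT0) hT2' hT3'
  rwa [hWZ, smul_pow, smul_mul_smul, ← pow_succ', smul_eq_zero_iff_right (pow_ne_zero 3 hT0)]
    at key

end IsDiscCalculus

end QuantumDisc

open QuantumDisc

theorem x_annihilates_omega_sq_general
    (q : ℝ) (hq0 : 0 < q) (hq1 : q < 1)
    {A : Type*} [Ring A] [Algebra ℂ A]
    (z w : A)
    (hzw : w * z - ((q : ℂ) ^ 2) • (z * w) = ((1 : ℂ) - (q : ℂ) ^ 2) • (1 : A))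
    (x : A) (hx : x = 1 - z * w)
    (σ : A ≃ₐ[ℂ] A) (hσz : σ z = ((q : ℂ) ^ 2) • z)
    (hσw : σ w = (((q : ℂ) ^ 2)⁻¹) • w)
    (D : A →ₗ[ℂ] A)
    (hDz : D z = w) (hDw : D w = 0)
    (Db : A →ₗ[ℂ] A)
    (hDbz : Db z = 0) (hDbw : Db w = ((q : ℂ) ^ 2) • z)
    {Ω : Type*} [Ring Ω] [Algebra ℂ Ω]
    (𝒜 : ℕ → Submodule ℂ Ω)
    (ι : A →ₐ[ℂ] Ω)
    (hι0 : ∀ a : A, ι a ∈ 𝒜 0)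
    (d : Ω →ₗ[ℂ] Ω)
    (hdd : ∀ ξ : Ω, d (d ξ) = 0)
    (hLeib : ∀ {n : ℕ} {ξ : Ω}, ξ ∈ 𝒜 n → ∀ η : Ω,
      d (ξ * η) = d ξ * η + ((-1 : ℂ) ^ n) • (ξ * d η))
    (ω ωb : Ω) (hω : ω ∈ 𝒜 1) (hωb : ωb ∈ 𝒜 1)
    (hωcomm : ∀ a : A, ω * ι a = ι (σ a) * ω)
    (hωbcomm : ∀ a : A, ωb * ι a = ι (σ a) * ωb)
    (hda : ∀ a : A, d (ι a) = ι (D a) * ω + ι (Db a) * ωb)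
    :
    ι x * ω ^ 2 = 0 ∧ ω ^ 2 * ι x = 0 ∧ ι x * ωb ^ 2 = 0 ∧ ωb ^ 2 * ι x = 0 := by
  set T : ℂ := (q : ℂ) ^ 2 with hT
  have hT0 : T ≠ 0 := pow_ne_zero 2 (Complex.ofReal_ne_zero.mpr hq0.ne')
  have hT2 : T ^ 2 + 1 ≠ 0 := by
    rw [hT]; exact_mod_cast (by positivity : (q ^ 2) ^ 2 + 1 ≠ 0)
  have hT3 : T ^ 3 ≠ 1 := by
    rw [hT]
    exact_mod_cast (pow_lt_one₀ (by positivity) (by nlinarith) three_ne_zero : (q ^ 2) ^ 3 < 1).ne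
  have twist (θ : Ω) (hθ : ∀ a, θ * ι a = ι (σ a) * θ) :
      θ * ι z = T • (ι z * θ) ∧ ι w * θ = T • (θ * ι w) := by
    refine ⟨by rw [hθ, hσz, map_smul, smul_mul_assoc], ?_⟩
    rw [hθ, hσw, map_smul, smul_mul_assoc, smul_smul, mul_inv_cancel₀ hT0, one_smul]
  have hC : IsDiscCalculus T d (ι z) (ι w) ω ωb :=
    { W_mul_Z := sub_eq_iff_eq_add'.mp (by simpa using congrArg ι hzw)
      ω_mul_Z := (twist ω hωcomm).1
      W_mul_ω := (twist ω hωcomm).2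
      θ_mul_Z := (twist ωb hωbcomm).1
      W_mul_θ := (twist ωb hωbcomm).2
      d_Z := by rw [hda, hDz, hDbz, map_zero, zero_mul, add_zero]
      d_W := by rw [hda, hDw, hDbw, map_zero, zero_mul, zero_add, map_smul, smul_mul_assoc]
      d_d_Z := hdd _
      d_d_W := hdd _
      d_Z_mul := fun η => by simpa using hLeib (hι0 z) η
      d_W_mul := fun η => by simpa using hLeib (hι0 w) η
      d_ω_mul := fun η => by simpa [sub_eq_add_neg] using hLeib hω η
      d_θ_mul := fun η => by simpa [sub_eq_add_neg] using hLeib hωb η }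
  have hω2 := hC.one_sub_mul_mul_ω_sq_eq_zero hT0 hT2 hT3
  have hωb2 := hC.one_sub_mul_mul_θ_sq_eq_zero hT0 hT2 hT3
  rw [hx, map_sub, map_one, map_mul]
  exact ⟨hω2, ((commute_one_sub_mul hC.ω_mul_Z hC.W_mul_ω).pow_left 2).eq.trans hω2,
    hωb2, ((commute_one_sub_mul hC.θ_mul_Z hC.W_mul_θ).pow_left 2).eq.trans hωb2⟩

theorem x_annihilates_omega_sq
    (q : ℝ) (hq0 : 0 < q) (hq1 : q < 1)
    {A : Type*} [Ring A] [Algebra ℂ A]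
    (z w : A)
    (hzw : w * z - ((q : ℂ) ^ 2) • (z * w) = ((1 : ℂ) - (q : ℂ) ^ 2) • (1 : A))
    (x : A) (hx : x = 1 - z * w)
    (σ : A ≃ₐ[ℂ] A) (hσz : σ z = ((q : ℂ) ^ 2) • z)
    (hσw : σ w = (((q : ℂ) ^ 2)⁻¹) • w)
    (D : A →ₗ[ℂ] A)
    (hD : ∀ a b : A, D (a * b) = D a * σ b + a * D b)
    (hDz : D z = w) (hDw : D w = 0)
    (Db : A →ₗ[ℂ] A)
    (hDb : ∀ a b : A, Db (a * b) = Db a * σ b + a * Db b)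
    (hDbz : Db z = 0) (hDbw : Db w = ((q : ℂ) ^ 2) • z)
    {Ω : Type*} [Ring Ω] [Algebra ℂ Ω]
    (𝒜 : ℕ → Submodule ℂ Ω)
    (hmul : ∀ {m n : ℕ} {ξ η : Ω}, ξ ∈ 𝒜 m → η ∈ 𝒜 n → ξ * η ∈ 𝒜 (m + n))
    (ι : A →ₐ[ℂ] Ω) (hι : Function.Injective ι)
    (hι0 : ∀ a : A, ι a ∈ 𝒜 0) (hι0' : ∀ u ∈ 𝒜 0, ∃ a : A, ι a = u)
    (d : Ω →ₗ[ℂ] Ω)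
    (hdeg : ∀ {n : ℕ} {ξ : Ω}, ξ ∈ 𝒜 n → d ξ ∈ 𝒜 (n + 1))
    (hdd : ∀ ξ : Ω, d (d ξ) = 0)
    (hLeib : ∀ {n : ℕ} {ξ : Ω}, ξ ∈ 𝒜 n → ∀ η : Ω,
      d (ξ * η) = d ξ * η + ((-1 : ℂ) ^ n) • (ξ * d η))
    (ω ωb : Ω) (hω : ω ∈ 𝒜 1) (hωb : ωb ∈ 𝒜 1)
    (hωcomm : ∀ a : A, ω * ι a = ι (σ a) * ω)
    (hωbcomm : ∀ a : A, ωb * ι a = ι (σ a) * ωb)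
    (hda : ∀ a : A, d (ι a) = ι (D a) * ω + ι (Db a) * ωb)
    :
    ι x * ω ^ 2 = 0 ∧ ω ^ 2 * ι x = 0 ∧ ι x * ωb ^ 2 = 0 ∧ ωb ^ 2 * ι x = 0 :=
  x_annihilates_omega_sq_general q hq0 hq1 z w hzw x hx σ hσz hσw D hDz hDw Db hDbz hDbw 𝒜 ι hι0 d
    hdd hLeib ω ωb hω hωb hωcomm hωbcomm hda
end

section
/- The following identities hold in Ω²: x z v = 0 = v x z, and consequently x v = 0 = v x. -/
theorem x_annihilates_v
    (q : ℝ) (hq0 : 0 < q) (hq1 : q < 1)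
    {A : Type*} [Ring A] [Algebra ℂ A]
    (z w : A)
    (hzw : w * z - ((q : ℂ) ^ 2) • (z * w) = ((1 : ℂ) - (q : ℂ) ^ 2) • (1 : A))
    (x : A) (hx : x = 1 - z * w)
    (σ : A ≃ₐ[ℂ] A) (hσz : σ z = ((q : ℂ) ^ 2) • z)
    (hσw : σ w = (((q : ℂ) ^ 2)⁻¹) • w)
    (D : A →ₗ[ℂ] A)
    (hD : ∀ a b : A, D (a * b) = D a * σ b + a * D b)
    (hDz : D z = w) (hDw : D w = 0)
    (Db : A →ₗ[ℂ] A)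
    (hDb : ∀ a b : A, Db (a * b) = Db a * σ b + a * Db b)
    (hDbz : Db z = 0) (hDbw : Db w = ((q : ℂ) ^ 2) • z)
    {Ω : Type*} [Ring Ω] [Algebra ℂ Ω]
    (𝒜 : ℕ → Submodule ℂ Ω)
    (hmul : ∀ {m n : ℕ} {ξ η : Ω}, ξ ∈ 𝒜 m → η ∈ 𝒜 n → ξ * η ∈ 𝒜 (m + n))
    (ι : A →ₐ[ℂ] Ω) (hι : Function.Injective ι)
    (hι0 : ∀ a : A, ι a ∈ 𝒜 0) (hι0' : ∀ u ∈ 𝒜 0, ∃ a : A, ι a = u)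
    (d : Ω →ₗ[ℂ] Ω)
    (hdeg : ∀ {n : ℕ} {ξ : Ω}, ξ ∈ 𝒜 n → d ξ ∈ 𝒜 (n + 1))
    (hdd : ∀ ξ : Ω, d (d ξ) = 0)
    (hLeib : ∀ {n : ℕ} {ξ : Ω}, ξ ∈ 𝒜 n → ∀ η : Ω,
      d (ξ * η) = d ξ * η + ((-1 : ℂ) ^ n) • (ξ * d η))
    (ω ωb : Ω) (hω : ω ∈ 𝒜 1) (hωb : ωb ∈ 𝒜 1)
    (hωcomm : ∀ a : A, ω * ι a = ι (σ a) * ω)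
    (hωbcomm : ∀ a : A, ωb * ι a = ι (σ a) * ωb)
    (hda : ∀ a : A, d (ι a) = ι (D a) * ω + ι (Db a) * ωb)
    (v : Ω)
    (hv : v = ((((q : ℂ) ^ 6)⁻¹) / ((q : ℂ) ^ 2 - 1)) • (ωb * ω + ((q : ℂ) ^ 8) • (ω * ωb)))
    :
    ι (x * z) * v = 0 ∧ v * ι (x * z) = 0 ∧ ι x * v = 0 ∧ v * ι x = 0 := by
  have hqc : (q : ℂ) ≠ 0 := by exact_mod_cast hq0.ne'
  have hq2 : ((q : ℂ) ^ 2) ≠ 0 := pow_ne_zero _ hqc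
  have hq1c : (1 : ℂ) - (q : ℂ) ^ 2 ≠ 0 := by
    intro h
    have h2 : ((1 - q ^ 2 : ℝ) : ℂ) = 0 := by push_cast; linear_combination h
    have := Complex.ofReal_eq_zero.mp h2
    nlinarith
  -- basic commutation lemmas
  have c2 : ∀ (α β : Ω), (∀ a, α * ι a = ι (σ a) * α) → (∀ a, β * ι a = ι (σ a) * β) →
      ∀ a : A, (α * β) * ι a = ι (σ (σ a)) * (α * β) := by
    intro α β hα hβ a
    rw [mul_assoc, hβ, ← mul_assoc, hα, mul_assoc]
  have cωω := c2 ω ω hωcomm hωcomm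
  have cωbω := c2 ωb ω hωbcomm hωcomm
  have cωωb := c2 ω ωb hωcomm hωbcomm
  have cωbωb := c2 ωb ωb hωbcomm hωbcomm
  have hσ2z : σ (σ z) = ((q : ℂ) ^ 4) • z := by
    rw [hσz, map_smul, hσz, smul_smul]; ring_nf
  have hσ2w : σ (σ w) = (((q : ℂ) ^ 4)⁻¹) • w := by
    rw [hσw, map_smul, hσw, smul_smul, ← mul_inv]; ring_nf
  -- Leibniz specializations
  have L0 : ∀ (a : A) (η : Ω), d (ι a * η) = d (ι a) * η + ι a * d η := by
    intro a η
    simpa using hLeib (hι0 a) η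
  have L1 : ∀ η : Ω, d (ω * η) = d ω * η - ω * d η := by
    intro η
    have := hLeib hω η
    simpa [sub_eq_add_neg] using this
  have L1b : ∀ η : Ω, d (ωb * η) = d ωb * η - ωb * d η := by
    intro η
    have := hLeib hωb η
    simpa [sub_eq_add_neg] using this
  -- derivatives of generators
  have hdz : d (ι z) = ι w * ω := by
    rw [hda, hDz, hDbz, map_zero, zero_mul, add_zero]
  have hdw : d (ι w) = ((q : ℂ) ^ 2) • (ι z * ωb) := by
    rw [hda, hDw, hDbw, map_zero, zero_mul, zero_add, map_smul, smul_mul_assoc]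
  -- relation from hzw
  have hwz' : w * z = ((q : ℂ) ^ 2) • (z * w) + ((1 : ℂ) - (q : ℂ) ^ 2) • (1 : A) := by
    have := hzw
    linear_combination (norm := module) this
  have hιwz : ι w * ι z = ((q : ℂ) ^ 2) • (ι z * ι w) + ((1 : ℂ) - (q : ℂ) ^ 2) • (1 : Ω) := by
    have := congrArg ι hwz'
    simpa [map_add, map_smul, map_mul, map_one] using this
  -- Rz : ι w * d ω = ...
  have Rz : ι w * d ω = -(((q : ℂ) ^ 2) • (ι z * (ωb * ω))) := by
    have h0 := hdd (ι z)
    rw [hdz, L0 w ω, hdw, smul_mul_assoc, mul_assoc] at h0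
    linear_combination (norm := module) h0
  have Rw : ι z * d ωb = -(ι w * (ω * ωb)) := by
    have h0 := hdd (ι w)
    rw [hdw, map_smul, L0 z ωb, hdz, mul_assoc, smul_eq_zero] at h0
    have h1 := h0.resolve_left hq2
    linear_combination (norm := module) h1
  -- S2 : d ω * ι w = q⁴ • (ι z * (ω * ωb))
  have S2 : d ω * ι w = ((q : ℂ) ^ 4) • (ι z * (ω * ωb)) := by
    have e1 : d (ω * ι w) = d ω * ι w - ((q : ℂ) ^ 4) • (ι z * (ω * ωb)) := by
      rw [L1, hdw, mul_smul_comm, ← mul_assoc, hωcomm z, hσz, map_smul, smul_mul_assoc,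
        smul_mul_assoc, mul_assoc]
      module
    have e2 : d (ω * ι w) = ι z * (ωb * ω) + (((q : ℂ) ^ 2)⁻¹) • (ι w * d ω) := by
      rw [hωcomm w, hσw, map_smul, smul_mul_assoc, map_smul, L0, hdw, smul_mul_assoc, mul_assoc,
        smul_add, smul_smul, inv_mul_cancel₀ hq2, one_smul]
    have h := e1.symm.trans e2
    rw [Rz, smul_neg, smul_smul, inv_mul_cancel₀ hq2, one_smul] at h
    linear_combination (norm := module) h
  -- Cz
  have Cz : d ω * ι z = ((((q : ℂ) ^ 2)⁻¹ + (q : ℂ) ^ 2)) • (ι w * (ω * ω))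
      + ((q : ℂ) ^ 2) • (ι z * d ω) := by
    have e1 : d (ω * ι z) = d ω * ι z - (((q : ℂ) ^ 2)⁻¹) • (ι w * (ω * ω)) := by
      rw [L1, hdz, ← mul_assoc, hωcomm w, hσw, map_smul, smul_mul_assoc, smul_mul_assoc, mul_assoc]
    have e2 : d (ω * ι z) = ((q : ℂ) ^ 2) • (ι w * (ω * ω)) + ((q : ℂ) ^ 2) • (ι z * d ω) := by
      rw [hωcomm z, hσz, map_smul, smul_mul_assoc, map_smul, L0, hdz, mul_assoc, smul_add]
    have h := e1.symm.trans e2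
    linear_combination (norm := module) h
  -- formula for d ω
  have hdo : (((q : ℂ) ^ 2) * ((1 : ℂ) - (q : ℂ) ^ 2)) • d ω
      = -(((((q : ℂ) ^ 2)⁻¹ + (q : ℂ) ^ 2)) • (ι w * (ι w * (ω * ω)))) := by
    have h := congrArg (fun t => ι w * t) Cz
    simp only [mul_add, mul_smul_comm] at h
    rw [← mul_assoc (ι w) (d ω) (ι z), Rz, neg_mul, smul_mul_assoc, mul_assoc,
      cωbω z, hσ2z, map_smul, smul_mul_assoc, ← mul_assoc (ι w) (ι z) (d ω), hιwz,
      add_mul, smul_mul_assoc, smul_mul_assoc, one_mul, mul_assoc, Rz] at h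
    simp only [mul_smul_comm, smul_mul_assoc, smul_smul, mul_neg, neg_mul, smul_neg] at h
    linear_combination (norm := module) -h
  -- E1
  have E1 : ι z * (ωb * ω) = -(((q : ℂ) ^ 6) • (ι z * (ω * ωb))) := by
    have hA : ((((q : ℂ) ^ 2)⁻¹ + (q : ℂ) ^ 2)) • (ι w * (ι w * (ι w * (ω * ω))))
        = (((q : ℂ) ^ 4) * ((1 : ℂ) - (q : ℂ) ^ 2)) • (ι z * (ωb * ω)) := by
      have h := congrArg (fun t => ι w * t) hdo
      simp only [mul_smul_comm, mul_neg] at h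
      rw [Rz] at h
      simp only [mul_smul_comm, smul_mul_assoc, smul_smul, mul_neg, neg_mul, smul_neg] at h
      linear_combination (norm := module) h
    have h := congrArg (fun t => t * ι w) hdo
    simp only [smul_mul_assoc, neg_mul] at h
    rw [mul_assoc (ι w) (ι w * (ω * ω)) (ι w), mul_assoc (ι w) (ω * ω) (ι w),
      cωω w, hσ2w, map_smul] at h
    simp only [mul_smul_comm, smul_mul_assoc, smul_smul, mul_neg, neg_mul, smul_neg] at h
    have key : ((1:ℂ)-(q:ℂ)^2) • (ι z * (ωb * ω))
        = ((1:ℂ)-(q:ℂ)^2) • (-(((q:ℂ)^6) • (ι z * (ω * ωb)))) := by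
      linear_combination (norm := module) h - (((q:ℂ)^2)*((1:ℂ)-(q:ℂ)^2)) • S2
        - (((q:ℂ)^4)⁻¹) • hA
        - ((1:ℂ)-(q:ℂ)^2) • ((inv_mul_cancel₀ (pow_ne_zero 4 hqc) :
            ((q:ℂ)^4)⁻¹ * (q:ℂ)^4 = 1) • (ι z * (ωb * ω)))
    exact smul_right_injective Ω hq1c key
  -- mirror side
  -- S1 : d ωb * ι z = q⁻² • (ι w * (ωb * ω))
  have S1 : d ωb * ι z = (((q : ℂ) ^ 2)⁻¹) • (ι w * (ωb * ω)) := by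
    have e1 : d (ωb * ι z) = d ωb * ι z - (((q : ℂ) ^ 2)⁻¹) • (ι w * (ωb * ω)) := by
      rw [L1b, hdz, ← mul_assoc, hωbcomm w, hσw, map_smul, smul_mul_assoc, smul_mul_assoc,
        mul_assoc]
    have e2 : d (ωb * ι z) = ((q : ℂ) ^ 2) • (ι w * (ω * ωb)) + ((q : ℂ) ^ 2) • (ι z * d ωb) := by
      rw [hωbcomm z, hσz, map_smul, smul_mul_assoc, map_smul, L0, hdz, mul_assoc, smul_add]
    have h := e1.symm.trans e2
    rw [Rw] at h
    linear_combination (norm := module) h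
  -- Cbw
  have Cbw : d ωb * ι w = ((1:ℂ) + (q : ℂ) ^ 4) • (ι z * (ωb * ωb))
      + (((q : ℂ) ^ 2)⁻¹) • (ι w * d ωb) := by
    have e1 : d (ωb * ι w) = d ωb * ι w - ((q : ℂ) ^ 4) • (ι z * (ωb * ωb)) := by
      rw [L1b, hdw, mul_smul_comm, ← mul_assoc, hωbcomm z, hσz, map_smul, smul_mul_assoc,
        smul_mul_assoc, mul_assoc]
      module
    have e2 : d (ωb * ι w) = ι z * (ωb * ωb) + (((q : ℂ) ^ 2)⁻¹) • (ι w * d ωb) := by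
      rw [hωbcomm w, hσw, map_smul, smul_mul_assoc, map_smul, L0, hdw, smul_mul_assoc, mul_assoc,
        smul_add, smul_smul, inv_mul_cancel₀ hq2, one_smul]
    have h := e1.symm.trans e2
    linear_combination (norm := module) h
  -- formula for d ωb
  have hdob : ((((q : ℂ) ^ 4)⁻¹) * ((1 : ℂ) - (q : ℂ) ^ 2)) • d ωb
      = ((1:ℂ) + (q : ℂ) ^ 4) • (ι z * (ι z * (ωb * ωb))) := by
    have h := congrArg (fun t => ι z * t) Cbw
    simp only [mul_add, mul_smul_comm] at h
    rw [← mul_assoc (ι z) (d ωb) (ι w), Rw, neg_mul, mul_assoc, cωωb w, hσ2w, map_smul,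
      smul_mul_assoc, ← mul_assoc (ι z) (ι w) (d ωb)] at h
    have hzw2 : ι z * ι w = (((q:ℂ)^2)⁻¹) • (ι w * ι z)
        - ((((q:ℂ)^2)⁻¹) * ((1:ℂ) - (q:ℂ)^2)) • (1 : Ω) := by
      rw [hιwz]
      rw [smul_add, smul_smul, inv_mul_cancel₀ hq2, one_smul, smul_smul]
      abel
    rw [hzw2, sub_mul, smul_mul_assoc, smul_mul_assoc, one_mul, mul_assoc, Rw] at h
    simp only [mul_smul_comm, smul_mul_assoc, smul_smul, mul_neg, neg_mul, smul_neg,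
      smul_sub, sub_mul] at h
    linear_combination (norm := module) h
  -- E2
  have E2 : ι w * (ωb * ω) = -(((q : ℂ) ^ 6) • (ι w * (ω * ωb))) := by
    have hA : ((1:ℂ) + (q : ℂ) ^ 4) • (ι z * (ι z * (ι z * (ωb * ωb))))
        = -(((((q : ℂ) ^ 4)⁻¹) * ((1 : ℂ) - (q : ℂ) ^ 2)) • (ι w * (ω * ωb))) := by
      have h := congrArg (fun t => ι z * t) hdob
      simp only [mul_smul_comm] at h
      rw [Rw] at h
      simp only [mul_smul_comm, smul_mul_assoc, smul_smul, mul_neg, neg_mul, smul_neg] at h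
      linear_combination (norm := module) -h
    have h := congrArg (fun t => t * ι z) hdob
    simp only [smul_mul_assoc] at h
    rw [mul_assoc (ι z) (ι z * (ωb * ωb)) (ι z), mul_assoc (ι z) (ωb * ωb) (ι z),
      cωbωb z, hσ2z, map_smul] at h
    simp only [mul_smul_comm, smul_mul_assoc, smul_smul, mul_neg, neg_mul, smul_neg] at h
    have key : (((q:ℂ)^4)⁻¹ * (((q:ℂ)^2)⁻¹ * ((1:ℂ)-(q:ℂ)^2))) • (ι w * (ωb * ω))
        = (((q:ℂ)^4)⁻¹ * (((q:ℂ)^2)⁻¹ * ((1:ℂ)-(q:ℂ)^2)))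
            • (-(((q:ℂ)^6) • (ι w * (ω * ωb)))) := by
      linear_combination (norm := module) h
        - ((((q:ℂ)^4)⁻¹) * ((1:ℂ)-(q:ℂ)^2)) • S1 + ((q:ℂ)^4) • hA
        + (((((q:ℂ)^4)⁻¹ * (q:ℂ)^4 * ((1:ℂ)-(q:ℂ)^2))) *
            (inv_mul_cancel₀ hq2 : ((q:ℂ)^2)⁻¹ * (q:ℂ)^2 = 1)) •
              (ι w * (ω * ωb))
    have hc : (((q:ℂ)^4)⁻¹ * (((q:ℂ)^2)⁻¹ * ((1:ℂ)-(q:ℂ)^2))) ≠ 0 :=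
      mul_ne_zero (inv_ne_zero (pow_ne_zero 4 hqc)) (mul_ne_zero (inv_ne_zero hq2) hq1c)
    exact smul_right_injective Ω hc key
  -- P : ωb * ω = -(q⁶ • (ω * ωb))
  have P : ωb * ω = -(((q : ℂ) ^ 6) • (ω * ωb)) := by
    have h1 := congrArg (fun t => ι w * t) E1
    have h2 := congrArg (fun t => ι z * t) E2
    simp only [mul_smul_comm, mul_neg] at h1 h2
    rw [← mul_assoc (ι w) (ι z) (ωb * ω), hιwz, add_mul, smul_mul_assoc, smul_mul_assoc,
      one_mul, mul_assoc, ← mul_assoc (ι w) (ι z) (ω * ωb), hιwz, add_mul, smul_mul_assoc,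
      smul_mul_assoc, one_mul, mul_assoc] at h1
    have key : ((1:ℂ)-(q:ℂ)^2) • (ωb * ω)
        = ((1:ℂ)-(q:ℂ)^2) • (-(((q:ℂ)^6) • (ω * ωb))) := by
      linear_combination (norm := module) h1 - ((q:ℂ)^2) • h2
    exact smul_right_injective Ω hq1c key
  -- Q : ι z * (ι w * (ω * ωb)) = ω * ωb
  have Q : ι z * (ι w * (ω * ωb)) = ω * ωb := by
    have h := congrArg (fun t => ι w * t) S2
    simp only [mul_smul_comm] at h
    rw [← mul_assoc (ι w) (d ω) (ι w), Rz, neg_mul, smul_mul_assoc, mul_assoc, cωbω w,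
      hσ2w, map_smul, smul_mul_assoc, ← mul_assoc (ι w) (ι z) (ω * ωb), hιwz, add_mul,
      smul_mul_assoc, smul_mul_assoc, one_mul, mul_assoc, P] at h
    simp only [mul_smul_comm, smul_mul_assoc, smul_smul, mul_neg, neg_mul, smul_neg] at h
    have key : ((q:ℂ)^4 * ((1:ℂ)-(q:ℂ)^2)) • (ι z * (ι w * (ω * ωb)))
        = ((q:ℂ)^4 * ((1:ℂ)-(q:ℂ)^2)) • (ω * ωb) := by
      linear_combination (norm := module) h
        + ((-((q:ℂ)^4)) * (inv_mul_cancel₀ (pow_ne_zero 4 hqc) :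
            ((q:ℂ)^4)⁻¹ * (q:ℂ)^4 = 1)) • (ι z * (ι w * (ω * ωb)))
    exact smul_right_injective Ω (mul_ne_zero (pow_ne_zero 4 hqc) hq1c) key
  -- v = ω * ωb
  have hveq : v = ω * ωb := by
    rw [hv, P]
    have : ((q:ℂ)^6)⁻¹ / ((q:ℂ)^2 - 1) * ((q:ℂ)^8) - ((q:ℂ)^6)⁻¹ / ((q:ℂ)^2 - 1) * ((q:ℂ)^6)
        = 1 := by
      have h21 : (q:ℂ)^2 - 1 ≠ 0 := by
        intro hh; apply hq1c; linear_combination -hh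
      field_simp
    linear_combination (norm := module) this • (ω * ωb)
  -- final goals
  have hσx : σ x = x := by
    rw [hx, map_sub, map_one, map_mul, hσz, hσw, smul_mul_smul_comm, mul_inv_cancel₀ hq2,
      one_smul]
  have G3 : ι x * v = 0 := by
    rw [hveq, hx, map_sub, map_one, map_mul, sub_mul, one_mul, mul_assoc, Q, sub_self]
  have hxz : x * z = ((q:ℂ)^2) • (z * x) := by
    rw [hx, sub_mul, one_mul, mul_sub, mul_one, mul_assoc, hwz']
    simp only [mul_add, mul_smul_comm, mul_one, smul_sub]
    module
  have G1 : ι (x * z) * v = 0 := by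
    rw [hxz, map_smul, map_mul, smul_mul_assoc, mul_assoc, G3, mul_zero, smul_zero]
  have cv : ∀ a : A, v * ι a = ι (σ (σ a)) * v := by
    intro a
    rw [hveq]
    exact cωωb a
  have G4 : v * ι x = 0 := by
    rw [cv, hσx, hσx, G3]
  have G2 : v * ι (x * z) = 0 := by
    have h1 : σ (x * z) = ((q:ℂ)^2) • (x * z) := by
      rw [map_mul, hσx, hσz, mul_smul_comm]
    have h2 : σ (σ (x * z)) = ((q:ℂ)^4) • (x * z) := by
      rw [h1, map_smul, h1, smul_smul]
      module
    rw [cv, h2, map_smul, smul_mul_assoc, G1, smul_zero]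
  exact ⟨G1, G2, G3, G4⟩
end

section
/- For every integer N ≥ 1, setting y = z^N, the following quantum cone relations hold in A: x y = q^{2N} y x, y w^N = ∏_{l=0}^{N−1} (1 − q^{−2l} x), and w^N y = ∏_{l=1}^{N} (1 − q^{2l} x). -/
theorem quantum_cone_relations
    (q : ℝ) (hq0 : 0 < q) (hq1 : q < 1)
    {A : Type*} [Ring A] [Algebra ℂ A]
    (z w : A)
    (hzw : w * z - ((q : ℂ) ^ 2) • (z * w) = ((1 : ℂ) - (q : ℂ) ^ 2) • (1 : A))
    (x : A) (hx : x = 1 - z * w)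
    (N : ℕ) (hN : 1 ≤ N)
    :
    x * z ^ N = ((q : ℂ) ^ (2 * N)) • (z ^ N * x) ∧
    z ^ N * w ^ N = ((List.range N).map (fun l => (1 : A) - (((q : ℂ) ^ (2 * l))⁻¹) • x)).prod ∧
    w ^ N * z ^ N = ((List.range N).map (fun l => (1 : A) - ((q : ℂ) ^ (2 * (l + 1))) • x)).prod := by
  set c : ℂ := (q : ℂ) ^ 2 with hc
  have hqne : (q : ℂ) ≠ 0 := by exact_mod_cast hq0.ne'
  have hcne : c ≠ 0 := pow_ne_zero _ hqne
  have hpow : ∀ l : ℕ, (q : ℂ) ^ (2 * l) = c ^ l := by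
    intro l; rw [hc, ← pow_mul]
  have hzw1 : z * w = 1 - x := by rw [hx]; abel
  have hwz1 : w * z = 1 - c • x := by
    have h := sub_eq_iff_eq_add.mp hzw
    rw [h, hzw1]
    module
  -- basic commutation relations
  have hxz : x * z = c • (z * x) := by
    have h1 : x * z = z - z * (w * z) := by rw [hx]; noncomm_ring
    rw [h1, hwz1, mul_sub, mul_one, mul_smul_comm]
    abel
  have hwx : w * x = c • (x * w) := by
    have h1 : w * x = w - (w * z) * w := by rw [hx]; noncomm_ring
    rw [h1, hwz1, sub_mul, one_mul, smul_mul_assoc]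
    abel
  -- powers
  have hxzn : ∀ n : ℕ, x * z ^ n = c ^ n • (z ^ n * x) := by
    intro n
    induction n with
    | zero => simp
    | succ n ih =>
      rw [pow_succ, ← mul_assoc, ih, smul_mul_assoc, mul_assoc, hxz,
        mul_smul_comm, smul_smul, pow_succ, mul_assoc]
  have hwnx : ∀ n : ℕ, w ^ n * x = c ^ n • (x * w ^ n) := by
    intro n
    induction n with
    | zero => simp
    | succ n ih =>
      rw [pow_succ', mul_assoc, ih, mul_smul_comm, ← mul_assoc, hwx,
        smul_mul_assoc, smul_smul, pow_succ', mul_assoc]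
      ring_nf
  have hxwn : ∀ n : ℕ, x * w ^ n = (c ^ n)⁻¹ • (w ^ n * x) := by
    intro n
    rw [hwnx n, inv_smul_smul₀ (pow_ne_zero n hcne)]
  refine ⟨by rw [hpow, hxzn], ?_, ?_⟩
  · -- z^N * w^N
    clear hN
    induction N with
    | zero => simp
    | succ n ih =>
      have key : z ^ (n + 1) * w ^ (n + 1)
          = z ^ n * w ^ n * (1 - (c ^ n)⁻¹ • x) := by
        rw [pow_succ z, pow_succ' w]
        calc (z ^ n * z) * (w * w ^ n) = z ^ n * (z * w) * w ^ n := by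
              rw [mul_assoc, mul_assoc, mul_assoc]
          _ = z ^ n * w ^ n - z ^ n * (x * w ^ n) := by
              rw [hzw1]; noncomm_ring
          _ = z ^ n * w ^ n - (c ^ n)⁻¹ • (z ^ n * w ^ n * x) := by
              rw [hxwn, mul_smul_comm, mul_assoc]
          _ = z ^ n * w ^ n * (1 - (c ^ n)⁻¹ • x) := by
              rw [mul_sub, mul_one, mul_smul_comm]
      rw [key, ih, List.range_succ, List.map_append, List.prod_append,
        List.map_singleton, List.prod_singleton, hpow]
  · -- w^N * z^N
    clear hN
    induction N with
    | zero => simp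
    | succ n ih =>
      have key : w ^ (n + 1) * z ^ (n + 1)
          = w ^ n * z ^ n * (1 - c ^ (n + 1) • x) := by
        rw [pow_succ w, pow_succ' z]
        calc (w ^ n * w) * (z * z ^ n) = w ^ n * (w * z) * z ^ n := by
              rw [mul_assoc, mul_assoc, mul_assoc]
          _ = w ^ n * z ^ n - c • (w ^ n * (x * z ^ n)) := by
              rw [hwz1, mul_sub, mul_one, mul_smul_comm, sub_mul, smul_mul_assoc,
                mul_assoc]
          _ = w ^ n * z ^ n - c ^ (n + 1) • (w ^ n * z ^ n * x) := by
              rw [hxzn, mul_smul_comm, smul_smul, mul_assoc]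
              ring_nf
          _ = w ^ n * z ^ n * (1 - c ^ (n + 1) • x) := by
              rw [mul_sub, mul_one, mul_smul_comm]
      rw [key, ih, List.range_succ, List.map_append, List.prod_append,
        List.map_singleton, List.prod_singleton, hpow]
end

section
/- For every integer N ≥ 2, ∂(z^N) = ([N]_{q²} − q^{−2N+4} [N]_{q⁴} x) z^{N−2}. -/
lemma qint_succ (s : ℂ) (n : ℕ) : qint s (n + 1) = s * qint s n + 1 := by
  simp [qint, geom_sum_succ]

theorem partial_z_pow_N
    (q : ℝ) (hq0 : 0 < q) (hq1 : q < 1)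
    {A : Type*} [Ring A] [Algebra ℂ A]
    (z w : A)
    (hzw : w * z - ((q : ℂ) ^ 2) • (z * w) = ((1 : ℂ) - (q : ℂ) ^ 2) • (1 : A))
    (x : A) (hx : x = 1 - z * w)
    (σ : A ≃ₐ[ℂ] A) (hσz : σ z = ((q : ℂ) ^ 2) • z)
    (hσw : σ w = (((q : ℂ) ^ 2)⁻¹) • w)
    (D : A →ₗ[ℂ] A)
    (hD : ∀ a b : A, D (a * b) = D a * σ b + a * D b)
    (hDz : D z = w) (hDw : D w = 0)
    (N : ℕ) (hN : 2 ≤ N)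
    :
    D (z ^ N) =
      ((qint ((q : ℂ) ^ 2) N) • (1 : A) -
        ((((q : ℂ) ^ (2 * (N - 2)))⁻¹) * qint ((q : ℂ) ^ 4) N) • x) * z ^ (N - 2) := by
  have hc : (q : ℂ) ≠ 0 := by
    exact_mod_cast ne_of_gt hq0
  have hzw1 : z * w = 1 - x := by rw [hx]; abel
  have hwz : w * z = (1 : A) - ((q : ℂ) ^ 2) • x := by
    rw [sub_eq_iff_eq_add] at hzw
    rw [hzw, hzw1, smul_sub, sub_smul, one_smul]
    abel
  have hxz : x * z = ((q : ℂ) ^ 2) • (z * x) := by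
    have h1 : x * z = z - z * (w * z) := by
      rw [hx, sub_mul, one_mul, mul_assoc]
    rw [h1, hwz, mul_sub, mul_one, mul_smul_comm]
    abel
  have hxzn : ∀ n : ℕ, x * z ^ n = ((q : ℂ) ^ (2 * n)) • (z ^ n * x) := by
    intro n
    induction n with
    | zero => simp
    | succ n ih =>
      rw [pow_succ, ← mul_assoc, ih, smul_mul_assoc, mul_assoc, hxz, mul_smul_comm,
        smul_smul, mul_assoc]
      congr 1
      ring
  have hznx : ∀ n : ℕ, z ^ n * x = (((q : ℂ) ^ (2 * n))⁻¹) • (x * z ^ n) := by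
    intro n
    rw [hxzn n, smul_smul, inv_mul_cancel₀ (pow_ne_zero _ hc), one_smul]
  have hzwp : ∀ n : ℕ, z ^ (n + 1) * w
      = z ^ n - (((q : ℂ) ^ (2 * n))⁻¹) • (x * z ^ n) := by
    intro n
    rw [pow_succ, mul_assoc, hzw1, mul_sub, mul_one, hznx n]
  have hDpow : ∀ n : ℕ, D (z ^ (n + 1))
      = ((q : ℂ) ^ 2) • (D (z ^ n) * z) + z ^ n * w := by
    intro n
    rw [pow_succ, hD, hσz, hDz, mul_smul_comm]
  have key : ∀ n : ℕ, D (z ^ (n + 2)) =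
      ((qint ((q : ℂ) ^ 2) (n + 2)) • (1 : A) -
        ((((q : ℂ) ^ (2 * n))⁻¹) * qint ((q : ℂ) ^ 4) (n + 2)) • x) * z ^ n := by
    intro n
    induction n with
    | zero =>
      have hD2 : D (z ^ 2) = ((q : ℂ) ^ 2) • (w * z) + z * w := by
        rw [sq, hD, hσz, hDz, mul_smul_comm]
      have h2 : qint ((q : ℂ) ^ 2) 2 = 1 + (q : ℂ) ^ 2 := by
        simp [qint, Finset.sum_range_succ]
      have h4 : qint ((q : ℂ) ^ 4) 2 = 1 + (q : ℂ) ^ 4 := by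
        simp [qint, Finset.sum_range_succ]
      simp only [zero_add, Nat.mul_zero, pow_zero, mul_one]
      rw [hD2, hwz, hzw1, h2, h4]
      match_scalars <;> ring
    | succ n ih =>
      rw [hDpow (n + 2), ih, hzwp (n + 1)]
      rw [sub_mul, smul_mul_assoc, smul_mul_assoc, one_mul]
      rw [sub_mul, smul_mul_assoc, smul_mul_assoc, mul_assoc x, ← pow_succ]
      rw [sub_mul, smul_mul_assoc, smul_mul_assoc, one_mul]
      rw [qint_succ ((q : ℂ) ^ 2) (n + 2), qint_succ ((q : ℂ) ^ 4) (n + 2)]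
      have hp : (q : ℂ) ^ (2 * (n + 1)) = (q : ℂ) ^ (2 * n) * (q : ℂ) ^ 2 := by
        rw [← pow_add]; ring_nf
      rw [hp]
      match_scalars
      · ring
      · field_simp
        ring
  obtain ⟨n, rfl⟩ : ∃ n, N = n + 2 := ⟨N - 2, by omega⟩
  simpa using key n
end

section
/- Let q be a real number with 0 < q < 1 and let N ≥ 2 be an integer. Then there is no integer k with −2N+2 ≤ k ≤ −N−1 or 2 ≤ k ≤ N−1 such that q^{2k} (q^{2N} + 1) = q² + 1. Equivalently, for such k the quantity q² [N+k−1]_{q²} + [k]_{q²} is nonzero (strictly positive if k > 0 and strictly negative if k ≤ −N). -/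
/-- The q-integer `[n]_s = (s^n - 1)/(s - 1)` for integer `n`. -/
noncomputable def qzint (s : ℝ) (n : ℤ) : ℝ := (s ^ n - 1) / (s - 1)

/-! With `s = q²`, `s [N+k-1]_s + [k]_s = (s^(N+k) + s^k - (s + 1)) / (s - 1)`, and
`s^(N+k) + s^k = q^(2k) (q^(2N) + 1)`. For `0 < s < 1` both powers exceed `1` when `N + k < 0`
and `k < 0`, while for `k ≥ 2` and `N + k > 0` we have `s^k < s` and `s^(N+k) < 1`; so the
numerator never vanishes and its sign is known in each range. -/

theorem mul_qzint_add_qzint {s : ℝ} (hs : s ≠ 0) (N k : ℤ) :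
    s * qzint s (N + k - 1) + qzint s k = (s ^ (N + k) + s ^ k - (s + 1)) / (s - 1) := by
  have hshift : s * s ^ (N + k - 1) = s ^ (N + k) := by
    rw [← zpow_one_add₀ hs]
    ring_nf
  unfold qzint
  rw [← mul_div_assoc, ← add_div, mul_sub, hshift]
  ring_nf

theorem add_one_lt_zpow_add_zpow {s : ℝ} (hs0 : 0 < s) (hs1 : s < 1) {N k : ℤ}
    (hNk : N + k < 0) (hk : k < 0) :
    s + 1 < s ^ (N + k) + s ^ k := by
  linarith [one_lt_zpow_of_neg₀ hs0 hs1 hNk, one_lt_zpow_of_neg₀ hs0 hs1 hk]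

theorem zpow_add_zpow_lt_add_one {s : ℝ} (hs0 : 0 < s) (hs1 : s < 1) {N k : ℤ}
    (hNk : 0 < N + k) (hk : 1 < k) :
    s ^ (N + k) + s ^ k < s + 1 := by
  have hsk : s ^ k < s ^ (1 : ℤ) := zpow_lt_zpow_right_of_lt_one₀ hs0 hs1 hk
  rw [zpow_one] at hsk
  linarith [zpow_lt_one₀ hs0 hs1 hNk]

theorem no_common_root_criterion_general
    (q : ℝ) (hq0 : 0 < q) (hq1 : q < 1) (N : ℤ)
    :
    ∀ k : ℤ, ((-2 * N + 2 ≤ k ∧ k ≤ -N - 1) ∨ (2 ≤ k ∧ k ≤ N - 1)) →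
      q ^ (2 * k) * (q ^ (2 * N) + 1) ≠ q ^ 2 + 1 ∧
      q ^ 2 * qzint (q ^ 2) (N + k - 1) + qzint (q ^ 2) k ≠ 0 ∧
      (0 < k → 0 < q ^ 2 * qzint (q ^ 2) (N + k - 1) + qzint (q ^ 2) k) ∧
      (k ≤ -N → q ^ 2 * qzint (q ^ 2) (N + k - 1) + qzint (q ^ 2) k < 0) := by
  intro k hk
  set s : ℝ := q ^ 2 with hs
  have hs0 : 0 < s := by positivity
  have hs1 : s < 1 := pow_lt_one₀ hq0.le hq1 two_ne_zero
  have hpow : q ^ (2 * k) * (q ^ (2 * N) + 1) = s ^ (N + k) + s ^ k := by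
    simp only [zpow_mul, zpow_ofNat, ← hs, zpow_add₀ hs0.ne']
    ring
  rw [hpow, mul_qzint_add_qzint hs0.ne']
  have hden : s - 1 < 0 := by linarith
  rcases hk with ⟨hk_lower, hk_upper⟩ | ⟨hk_lower, hk_upper⟩
  · have hnum := add_one_lt_zpow_add_zpow hs0 hs1 (N := N) (k := k) (by omega) (by omega)
    have hneg := div_neg_of_pos_of_neg (sub_pos.mpr hnum) hden
    exact ⟨hnum.ne', hneg.ne, fun hk_pos => by omega, fun _ => hneg⟩
  · have hnum := zpow_add_zpow_lt_add_one hs0 hs1 (N := N) (k := k) (by omega) (by omega)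
    have hpos := div_pos_of_neg_of_neg (sub_neg.mpr hnum) hden
    exact ⟨hnum.ne, hpos.ne', fun _ => hpos, fun hk_le => by omega⟩

theorem no_common_root_criterion
    (q : ℝ) (hq0 : 0 < q) (hq1 : q < 1) (N : ℤ) (hN : 2 ≤ N)
    :
    ∀ k : ℤ, ((-2 * N + 2 ≤ k ∧ k ≤ -N - 1) ∨ (2 ≤ k ∧ k ≤ N - 1)) →
      q ^ (2 * k) * (q ^ (2 * N) + 1) ≠ q ^ 2 + 1 ∧
      q ^ 2 * qzint (q ^ 2) (N + k - 1) + qzint (q ^ 2) k ≠ 0 ∧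
      (0 < k → 0 < q ^ 2 * qzint (q ^ 2) (N + k - 1) + qzint (q ^ 2) k) ∧
      (k ≤ -N → q ^ 2 * qzint (q ^ 2) (N + k - 1) + qzint (q ^ 2) k < 0) :=
  no_common_root_criterion_general q hq0 hq1 N
end
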